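/- arXiv:2002.00001 — 13 statements merged into one kernel-verified Lean document; each statement's English description precedes it below -/
import Mathlib

section
/- Let a > b > 0 be real numbers, δ := √(a⁴ − a²b² + b⁴), and k₄ := ((a² + b²)·δ − 2a²b²)/(a² − b²). Then k₄ = b² if and only if a⁴ + 2a²b² − 7b⁴ = 0, which holds if and only if a = b·√(2√2 − 1). -/
/-- For the elliptic billiard with semi-axes `a > b > 0`, with
`δ = √(a⁴ − a²b² + b⁴)` and `k₄ = ((a² + b²)δ − 2a²b²)/(a² − b²)`
(the X₄-locus parameter), one has `k₄ = b²` iff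
`a⁴ + 2a²b² − 7b⁴ = 0`, iff `a = b·√(2√2 − 1)`. -/
theorem stmt_0 (a b : ℝ) (hb : 0 < b) (hab : b < a)
    (δ k₄ : ℝ)
    (hδ : δ = Real.sqrt (a ^ 4 - a ^ 2 * b ^ 2 + b ^ 4))
    (hk : k₄ = ((a ^ 2 + b ^ 2) * δ - 2 * a ^ 2 * b ^ 2) / (a ^ 2 - b ^ 2)) :
    (k₄ = b ^ 2 ↔ a ^ 4 + 2 * a ^ 2 * b ^ 2 - 7 * b ^ 4 = 0) ∧
    (a ^ 4 + 2 * a ^ 2 * b ^ 2 - 7 * b ^ 4 = 0 ↔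
      a = b * Real.sqrt (2 * Real.sqrt 2 - 1)) := by
  have ha : 0 < a := hb.trans hab
  have hd2 : (0:ℝ) ≤ a ^ 4 - a ^ 2 * b ^ 2 + b ^ 4 := by
    nlinarith [sq_nonneg (a ^ 2 - b ^ 2), sq_nonneg (a * b)]
  have hδ0 : 0 ≤ δ := hδ ▸ Real.sqrt_nonneg _
  have hδsq : δ ^ 2 = a ^ 4 - a ^ 2 * b ^ 2 + b ^ 4 := by
    rw [hδ, Real.sq_sqrt hd2]
  have hne : a ^ 2 - b ^ 2 ≠ 0 := by nlinarith
  constructor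
  · rw [hk, div_eq_iff hne]
    constructor
    · intro h
      have h1 : (a ^ 2 + b ^ 2) * δ = 3 * a ^ 2 * b ^ 2 - b ^ 4 := by
        linear_combination h
      have h3 : (a ^ 2 + b ^ 2) ^ 2 * (a ^ 4 - a ^ 2 * b ^ 2 + b ^ 4)
          = (3 * a ^ 2 * b ^ 2 - b ^ 4) ^ 2 := by
        rw [← hδsq]
        linear_combination ((a ^ 2 + b ^ 2) * δ + 3 * a ^ 2 * b ^ 2 - b ^ 4) * h1
      have key : a ^ 2 * (a ^ 2 - b ^ 2) * (a ^ 4 + 2 * a ^ 2 * b ^ 2 - 7 * b ^ 4) = 0 := by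
        linear_combination h3
      rcases mul_eq_zero.mp key with h' | h'
      · have : 0 < a ^ 2 * (a ^ 2 - b ^ 2) :=
          mul_pos (pow_pos ha 2) (by nlinarith)
        linarith
      · exact h'
    · intro h
      have h3 : (a ^ 2 + b ^ 2) ^ 2 * (a ^ 4 - a ^ 2 * b ^ 2 + b ^ 4)
          = (3 * a ^ 2 * b ^ 2 - b ^ 4) ^ 2 := by
        linear_combination (a ^ 2 * (a ^ 2 - b ^ 2)) * h
      have h1 : ((a ^ 2 + b ^ 2) * δ) ^ 2 = (3 * a ^ 2 * b ^ 2 - b ^ 4) ^ 2 := by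
        rw [mul_pow, hδsq]; linear_combination h3
      have hL : 0 ≤ (a ^ 2 + b ^ 2) * δ := mul_nonneg (by positivity) hδ0
      have hR : (0:ℝ) ≤ 3 * a ^ 2 * b ^ 2 - b ^ 4 := by
        nlinarith [mul_pos (pow_pos hb 2) (show (0:ℝ) < 3 * a ^ 2 - b ^ 2 by nlinarith)]
      have h2 : (a ^ 2 + b ^ 2) * δ = 3 * a ^ 2 * b ^ 2 - b ^ 4 := by
        have := congrArg Real.sqrt h1
        rwa [Real.sqrt_sq hL, Real.sqrt_sq hR] at this
      linear_combination h2
  · have hs2 : Real.sqrt 2 ^ 2 = 2 := Real.sq_sqrt (by norm_num)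
    have hs1 : 1 ≤ Real.sqrt 2 := by nlinarith [Real.sqrt_nonneg 2]
    have ht2 : Real.sqrt (2 * Real.sqrt 2 - 1) ^ 2 = 2 * Real.sqrt 2 - 1 :=
      Real.sq_sqrt (by linarith)
    have ht0 : 0 ≤ Real.sqrt (2 * Real.sqrt 2 - 1) := Real.sqrt_nonneg _
    constructor
    · intro h
      have hfac : (a ^ 2 - (2 * Real.sqrt 2 - 1) * b ^ 2)
          * (a ^ 2 + (2 * Real.sqrt 2 + 1) * b ^ 2) = 0 := by
        linear_combination h - 4 * b ^ 4 * hs2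
      have hpos : 0 < a ^ 2 + (2 * Real.sqrt 2 + 1) * b ^ 2 := by nlinarith
      have ha2 : a ^ 2 = (2 * Real.sqrt 2 - 1) * b ^ 2 := by
        rcases mul_eq_zero.mp hfac with h' | h'
        · linarith
        · linarith
      have hsq : a ^ 2 = (b * Real.sqrt (2 * Real.sqrt 2 - 1)) ^ 2 := by
        rw [mul_pow, ht2]; linear_combination ha2
      have := congrArg Real.sqrt hsq
      rwa [Real.sqrt_sq ha.le, Real.sqrt_sq (mul_nonneg hb.le ht0)] at this
    · intro h
      have ha2 : a ^ 2 = (2 * Real.sqrt 2 - 1) * b ^ 2 := by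
        rw [h, mul_pow, ht2]; ring
      linear_combination (a ^ 2 + (2 * Real.sqrt 2 - 1) * b ^ 2 + 2 * b ^ 2) * ha2
        + 4 * b ^ 4 * hs2
end

section
/- Let a > b > 0 be real numbers, δ := √(a⁴ − a²b² + b⁴), and k₄ := ((a² + b²)·δ − 2a²b²)/(a² − b²). Then k₄ = ab if and only if a⁶ + a⁴b² − 4a³b³ − a²b⁴ − b⁶ = 0. -/
/-- For the elliptic billiard with semi-axes `a > b > 0`, with
`δ = √(a⁴ − a²b² + b⁴)` and `k₄ = ((a² + b²)δ − 2a²b²)/(a² − b²)`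
(the X₄-locus parameter), one has `k₄ = ab` iff
`a⁶ + a⁴b² − 4a³b³ − a²b⁴ − b⁶ = 0`. -/
theorem stmt_1 (a b : ℝ) (hb : 0 < b) (hab : b < a)
    (δ k₄ : ℝ)
    (hδ : δ = Real.sqrt (a ^ 4 - a ^ 2 * b ^ 2 + b ^ 4))
    (hk : k₄ = ((a ^ 2 + b ^ 2) * δ - 2 * a ^ 2 * b ^ 2) / (a ^ 2 - b ^ 2)) :
    k₄ = a * b ↔
      a ^ 6 + a ^ 4 * b ^ 2 - 4 * a ^ 3 * b ^ 3 - a ^ 2 * b ^ 4 - b ^ 6 = 0 := by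
  have ha : 0 < a := hb.trans hab
  have hEnn : (0:ℝ) ≤ a ^ 4 - a ^ 2 * b ^ 2 + b ^ 4 := by nlinarith [sq_nonneg (a^2 - b^2), sq_nonneg a, sq_nonneg b]
  have hδnn : 0 ≤ δ := hδ ▸ Real.sqrt_nonneg _
  have hδsq : δ ^ 2 = a ^ 4 - a ^ 2 * b ^ 2 + b ^ 4 := by
    rw [hδ, Real.sq_sqrt hEnn]
  have hd : (0:ℝ) < a ^ 2 - b ^ 2 := by nlinarith
  have hR : (0:ℝ) < a * b * (a ^ 2 - b ^ 2) + 2 * a ^ 2 * b ^ 2 := by positivity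
  have key : (a ^ 2 + b ^ 2) ^ 2 * (a ^ 4 - a ^ 2 * b ^ 2 + b ^ 4)
      - (a * b * (a ^ 2 - b ^ 2) + 2 * a ^ 2 * b ^ 2) ^ 2
      = (a ^ 2 - b ^ 2) *
        (a ^ 6 + a ^ 4 * b ^ 2 - 4 * a ^ 3 * b ^ 3 - a ^ 2 * b ^ 4 - b ^ 6) := by
    ring
  rw [hk, div_eq_iff (ne_of_gt hd)]
  constructor
  · intro h
    have h2 : (a ^ 2 + b ^ 2) * δ = a * b * (a ^ 2 - b ^ 2) + 2 * a ^ 2 * b ^ 2 := by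
      linarith
    have hsq : ((a ^ 2 + b ^ 2) * δ) ^ 2 =
        (a * b * (a ^ 2 - b ^ 2) + 2 * a ^ 2 * b ^ 2) ^ 2 := by rw [h2]
    have : (a ^ 2 - b ^ 2) *
        (a ^ 6 + a ^ 4 * b ^ 2 - 4 * a ^ 3 * b ^ 3 - a ^ 2 * b ^ 4 - b ^ 6) = 0 := by
      nlinarith [hsq, hδsq]
    exact (mul_eq_zero.mp this).resolve_left (ne_of_gt hd)
  · intro h
    have hsq : ((a ^ 2 + b ^ 2) * δ) ^ 2 =
        (a * b * (a ^ 2 - b ^ 2) + 2 * a ^ 2 * b ^ 2) ^ 2 := by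
      nlinarith [hδsq, key, h]
    have h2 : (a ^ 2 + b ^ 2) * δ = a * b * (a ^ 2 - b ^ 2) + 2 * a ^ 2 * b ^ 2 := by
      have hl : 0 ≤ (a ^ 2 + b ^ 2) * δ := by positivity
      nlinarith [hsq, hl, hR]
    linarith
end

section
/- Let u, v be real numbers with v ≠ 0, and set s₁ := √((u−1)² + v²), s₂ := √(u² + v²). Let Q₁ = (0,0), Q₂ = (1,0), Q₃ = (u,v), and define E(x,y) := v²x² + (u² + (s₁ − s₂ − 1)u + s₂)y² + v(1 − s₁ + s₂ − 2u)xy + v(u − s₂)y − v²x. Let the anticomplementary triangle (ACT) have vertices Q₁′ = (u−1, v), Q₂′ = (u+1, v), Q₃′ = (1−u, −v), and let X₁′ be the incenter of the ACT. Then E vanishes at Q₁, Q₂, Q₃, and E also vanishes at each of the three orthogonal projections of X₁′ onto the three side lines of the ACT (the intouchpoints of the ACT). -/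
noncomputable section

/-- The standard inner product on `ℝ²`. -/
def dot (p q : ℝ × ℝ) : ℝ := p.1 * q.1 + p.2 * q.2

/-- The Euclidean length of a vector of `ℝ²`. -/
def elen (p : ℝ × ℝ) : ℝ := Real.sqrt (dot p p)

/-- The orthogonal projection of the point `P` onto the line through `A` and `B`. -/
def projLine (P A B : ℝ × ℝ) : ℝ × ℝ :=
  A + (dot (P - A) (B - A) / dot (B - A) (B - A)) • (B - A)

/-- The incenter of the triangle `V₁V₂V₃`: the weighted average of the vertices,
each weighted by the length of the opposite side. -/
def incenter (V₁ V₂ V₃ : ℝ × ℝ) : ℝ × ℝ :=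
  (elen (V₂ - V₃) + elen (V₁ - V₃) + elen (V₁ - V₂))⁻¹ •
    (elen (V₂ - V₃) • V₁ + elen (V₁ - V₃) • V₂ + elen (V₁ - V₂) • V₃)

/-!
The sides of the anticomplementary triangle are twice those of `Q₁Q₂Q₃`, so its side
lengths are `2 s₂`, `2 s₁`, `2`. In any triangle the incircle touches side `V₂V₃` at distance
`(a + c - b) / 2` from `V₂` (the tangent length from `V₂`), which gives the three
intouchpoints in closed form; that `E` vanishes there is then a polynomial identity in
`u, v, s₁, s₂` once the denominators `s₁, s₂` are cleared.
-/

lemma dot_self_nonneg (p : ℝ × ℝ) : 0 ≤ dot p p := by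
  unfold dot; exact add_nonneg (mul_self_nonneg _) (mul_self_nonneg _)

lemma elen_nonneg (p : ℝ × ℝ) : 0 ≤ elen p :=
  Real.sqrt_nonneg _

lemma elen_mk (x y : ℝ) : elen (x, y) = √(x ^ 2 + y ^ 2) := by
  simp only [elen, dot, sq]

lemma elen_sq (p : ℝ × ℝ) : elen p ^ 2 = dot p p :=
  Real.sq_sqrt (dot_self_nonneg p)

lemma elen_pos {p : ℝ × ℝ} (hp : p ≠ 0) : 0 < elen p := by
  refine Real.sqrt_pos.2 ((dot_self_nonneg p).lt_of_ne fun h => hp ?_)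
  obtain ⟨x, y⟩ := p
  simp only [dot] at h
  have hx : x = 0 := by nlinarith [mul_self_nonneg x, mul_self_nonneg y]
  have hy : y = 0 := by nlinarith [mul_self_nonneg x, mul_self_nonneg y]
  simp [hx, hy]

lemma elen_smul (c : ℝ) (p : ℝ × ℝ) : elen (c • p) = |c| * elen p := by
  rw [elen, elen, ← Real.sqrt_sq_eq_abs, ← Real.sqrt_mul (sq_nonneg c)]
  congr 1
  simp only [dot, Prod.smul_fst, Prod.smul_snd, smul_eq_mul]
  ring

lemma elen_sub_comm (p q : ℝ × ℝ) : elen (p - q) = elen (q - p) := by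
  rw [← neg_sub, ← neg_one_smul ℝ (q - p), elen_smul, abs_neg, abs_one, one_mul]

lemma incenter_rotate (V₁ V₂ V₃ : ℝ × ℝ) : incenter V₂ V₃ V₁ = incenter V₁ V₂ V₃ := by
  rw [incenter, incenter, elen_sub_comm V₃ V₁, elen_sub_comm V₂ V₁]
  congr 1
  · ring
  · abel

theorem projLine_incenter (V₁ V₂ V₃ : ℝ × ℝ) :
    projLine (incenter V₁ V₂ V₃) V₂ V₃ =
      V₂ + ((elen (V₂ - V₃) + elen (V₁ - V₂) - elen (V₃ - V₁)) / (2 * elen (V₂ - V₃))) •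
        (V₃ - V₂) := by
  rcases eq_or_ne V₂ V₃ with rfl | hne
  · simp [projLine]
  have ha : 0 < elen (V₂ - V₃) := elen_pos (sub_ne_zero.2 hne)
  have hden : dot (V₃ - V₂) (V₃ - V₂) = elen (V₂ - V₃) ^ 2 := by
    rw [elen_sub_comm, elen_sq]
  have hnum : dot (incenter V₁ V₂ V₃ - V₂) (V₃ - V₂) =
      elen (V₂ - V₃) * (elen (V₂ - V₃) + elen (V₁ - V₂) - elen (V₃ - V₁)) / 2 := by
    rw [elen_sub_comm V₃]
    have ha2 := elen_sq (V₂ - V₃)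
    have hb2 := elen_sq (V₁ - V₃)
    have hc2 := elen_sq (V₁ - V₂)
    have hp : elen (V₂ - V₃) + elen (V₁ - V₃) + elen (V₁ - V₂) ≠ 0 :=
      ne_of_gt (by linarith [elen_nonneg (V₁ - V₃), elen_nonneg (V₁ - V₂)])
    rw [incenter]
    generalize elen (V₂ - V₃) = a, elen (V₁ - V₃) = b, elen (V₁ - V₂) = c at *
    simp only [dot, Prod.fst_sub, Prod.snd_sub, Prod.smul_fst, Prod.smul_snd, Prod.fst_add,
      Prod.snd_add, smul_eq_mul] at ha2 hb2 hc2 ⊢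
    field_simp
    -- the law of cosines at `V₂`: `2 ⟪V₁ - V₂, V₃ - V₂⟫ = c² + a² - b²`
    linear_combination a * (hb2 - hc2) - (a + 2 * c) * ha2
  rw [projLine, hden, hnum]
  congr 2
  field_simp

/-- The circumbilliard `E = 0` of the triangle `Q₁ = (0,0)`, `Q₂ = (1,0)`,
`Q₃ = (u,v)` passes through the three vertices and also through the three
intouchpoints of the anticomplementary triangle `Q₁′Q₂′Q₃′` (the orthogonal
projections of the ACT's incenter `X₁′` onto the ACT's three side lines). -/
theorem stmt_4 (u v : ℝ) (hv : v ≠ 0) (s₁ s₂ : ℝ)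
    (hs₁ : s₁ = Real.sqrt ((u - 1) ^ 2 + v ^ 2))
    (hs₂ : s₂ = Real.sqrt (u ^ 2 + v ^ 2))
    (E : ℝ → ℝ → ℝ)
    (hE : ∀ x y : ℝ, E x y =
      v ^ 2 * x ^ 2 + (u ^ 2 + (s₁ - s₂ - 1) * u + s₂) * y ^ 2 +
      v * (1 - s₁ + s₂ - 2 * u) * x * y + v * (u - s₂) * y - v ^ 2 * x)
    (Q₁ Q₂ Q₃ Q₁' Q₂' Q₃' X₁' : ℝ × ℝ)
    (hQ₁ : Q₁ = (0, 0)) (hQ₂ : Q₂ = (1, 0)) (hQ₃ : Q₃ = (u, v))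
    (hQ₁' : Q₁' = (u - 1, v)) (hQ₂' : Q₂' = (u + 1, v)) (hQ₃' : Q₃' = (1 - u, -v))
    (hX₁' : X₁' = incenter Q₁' Q₂' Q₃') :
    E Q₁.1 Q₁.2 = 0 ∧ E Q₂.1 Q₂.2 = 0 ∧ E Q₃.1 Q₃.2 = 0 ∧
    E (projLine X₁' Q₂' Q₃').1 (projLine X₁' Q₂' Q₃').2 = 0 ∧
    E (projLine X₁' Q₃' Q₁').1 (projLine X₁' Q₃' Q₁').2 = 0 ∧
    E (projLine X₁' Q₁' Q₂').1 (projLine X₁' Q₁' Q₂').2 = 0 := by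
  subst hX₁' hQ₁ hQ₂ hQ₃ hQ₁' hQ₂' hQ₃'
  have hs₁0 : s₁ ≠ 0 := by rw [hs₁]; positivity
  have hs₂0 : s₂ ≠ 0 := by rw [hs₂]; positivity
  have ha : elen ((u + 1, v) - (1 - u, -v)) = 2 * s₂ := by
    rw [show ((u + 1, v) - (1 - u, -v) : ℝ × ℝ) = (2 : ℝ) • (u, v) by ext <;> simp <;> ring,
      elen_smul, elen_mk, ← hs₂, abs_two]
  have hb : elen ((1 - u, -v) - (u - 1, v)) = 2 * s₁ := by
    rw [show ((1 - u, -v) - (u - 1, v) : ℝ × ℝ) = (-2 : ℝ) • (u - 1, v) by ext <;> simp <;> ring,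
      elen_smul, elen_mk, ← hs₁, abs_neg, abs_two]
  have hc : elen ((u - 1, v) - (u + 1, v)) = 2 := by
    rw [show ((u - 1, v) - (u + 1, v) : ℝ × ℝ) = (-2 : ℝ) • (1, 0) by ext <;> simp; ring,
      elen_smul, elen_mk]
    norm_num
  have h₁ := projLine_incenter (u - 1, v) (u + 1, v) (1 - u, -v)
  have h₂ := projLine_incenter (u + 1, v) (1 - u, -v) (u - 1, v)
  have h₃ := projLine_incenter (1 - u, -v) (u - 1, v) (u + 1, v)
  rw [incenter_rotate] at h₂ h₃
  rw [incenter_rotate] at h₃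
  rw [ha, hb, hc] at h₁ h₂ h₃
  rw [h₁, h₂, h₃]
  simp only [hE, Prod.mk_sub_mk, Prod.smul_mk, smul_eq_mul, Prod.mk_add_mk]
  refine ⟨by ring, by ring, by ring, ?_, ?_, ?_⟩ <;> field_simp <;> ring
end
end

section
/- Let A, B, C be affinely independent points of the Euclidean plane forming an acute triangle, i.e., ⟪B−A, C−A⟫ > 0, ⟪A−B, C−B⟫ > 0, ⟪A−C, B−C⟫ > 0. Let A′ be the orthogonal projection of A onto the line through B and C, B′ the orthogonal projection of B onto the line through A and C, and C′ the orthogonal projection of C onto the line through A and B. Then A′, B′, C′ are affinely independent, and the incenter of triangle A′B′C′ equals the orthocenter of triangle ABC. -/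
noncomputable section

/-- `H` is the orthocenter of the triangle `ABC`. -/
def IsOrthocenter (A B C H : ℝ × ℝ) : Prop :=
  dot (H - A) (B - C) = 0 ∧ dot (H - B) (A - C) = 0

lemma affInd_of_cross {P Q R : ℝ × ℝ}
    (h : (Q.1 - P.1) * (R.2 - P.2) - (Q.2 - P.2) * (R.1 - P.1) ≠ 0) :
    AffineIndependent ℝ ![P, Q, R] := by
  rw [affineIndependent_iff_not_collinear]
  intro hc
  rw [collinear_iff_of_mem (Set.mem_range_self (0 : Fin 3))] at hc
  obtain ⟨v, hv⟩ := hc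
  obtain ⟨t, ht⟩ := hv _ (Set.mem_range_self (1 : Fin 3))
  obtain ⟨s, hs⟩ := hv _ (Set.mem_range_self (2 : Fin 3))
  simp only [Matrix.cons_val_zero, Matrix.cons_val_one, Matrix.head_cons,
    Matrix.cons_val_two, Matrix.tail_cons] at ht hs
  apply h
  rw [ht, hs]
  simp [Prod.smul_def, smul_eq_mul]
  ring

lemma projLine_eq (P X Y : ℝ × ℝ) (p q : ℝ) (hp : dot (P - X) (Y - X) = p)
    (hq : dot (Y - X) (Y - X) = p + q) (h : p + q ≠ 0) :
    projLine P X Y = ((q * X.1 + p * Y.1) / (p + q), (q * X.2 + p * Y.2) / (p + q)) := by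
  rw [projLine, hp, hq]
  refine Prod.ext ?_ ?_ <;>
    simp only [Prod.fst_add, Prod.snd_add, Prod.smul_fst, Prod.smul_snd, Prod.fst_sub,
      Prod.snd_sub, smul_eq_mul] <;> field_simp <;> ring

lemma dot_combo {u1 u2 v1 v2 p q a b c : ℝ} (nu : u1 ^ 2 + u2 ^ 2 = a + b)
    (nv : v1 ^ 2 + v2 ^ 2 = a + c) (nuv : u1 * v1 + u2 * v2 = a) :
    (p * u1 + q * v1) * (p * u1 + q * v1) + (p * u2 + q * v2) * (p * u2 + q * v2)
      = p ^ 2 * (a + b) + 2 * p * q * a + q ^ 2 * (a + c) := by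
  linear_combination p ^ 2 * nu + q ^ 2 * nv + 2 * p * q * nuv

set_option maxHeartbeats 1000000 in
/-- Fagnano: for an acute triangle `ABC`, the feet `A′, B′, C′` of the altitudes
are affinely independent and the incenter of the orthic triangle `A′B′C′` is the
orthocenter of `ABC`. -/
theorem stmt_7 (A B C H : ℝ × ℝ)
    (hind : AffineIndependent ℝ ![A, B, C])
    (hA : 0 < dot (B - A) (C - A))
    (hB : 0 < dot (A - B) (C - B))
    (hC : 0 < dot (A - C) (B - C))
    (hH : IsOrthocenter A B C H)
    (A' B' C' : ℝ × ℝ)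
    (hA' : A' = projLine A B C) (hB' : B' = projLine B A C)
    (hC' : C' = projLine C A B) :
    AffineIndependent ℝ ![A', B', C'] ∧ incenter A' B' C' = H := by
  obtain ⟨hH1, hH2⟩ := hH
  set a := dot (B - A) (C - A) with ha
  set b := dot (A - B) (C - B) with hb
  set c := dot (A - C) (B - C) with hc
  have hab : (0:ℝ) < a + b := by linarith
  have hbc : (0:ℝ) < b + c := by linarith
  have hac : (0:ℝ) < a + c := by linarith
  have habne : (a:ℝ) + b ≠ 0 := by positivity
  have hbcne : (b:ℝ) + c ≠ 0 := by positivity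
  have hacne : (a:ℝ) + c ≠ 0 := by positivity
  -- coordinate expansions of a, b, c
  have ha' : a = (B.1 - A.1) * (C.1 - A.1) + (B.2 - A.2) * (C.2 - A.2) := by
    rw [ha]; rfl
  have hb' : b = (A.1 - B.1) * (C.1 - B.1) + (A.2 - B.2) * (C.2 - B.2) := by
    rw [hb]; rfl
  have hc' : c = (A.1 - C.1) * (B.1 - C.1) + (A.2 - C.2) * (B.2 - C.2) := by
    rw [hc]; rfl
  -- norms of the edge vectors
  have nu : (B.1 - A.1) ^ 2 + (B.2 - A.2) ^ 2 = a + b := by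
    rw [ha', hb']; ring
  have nv : (C.1 - A.1) ^ 2 + (C.2 - A.2) ^ 2 = a + c := by
    rw [ha', hc']; ring
  have nuv : (B.1 - A.1) * (C.1 - A.1) + (B.2 - A.2) * (C.2 - A.2) = a := ha'.symm
  -- feet of altitudes, explicitly
  have eA' : A' = ((c * B.1 + b * C.1) / (b + c), (c * B.2 + b * C.2) / (b + c)) := by
    rw [hA']
    refine projLine_eq A B C b c hb.symm ?_ hbc.ne'
    rw [hb', hc']; show (C.1 - B.1) * (C.1 - B.1) + (C.2 - B.2) * (C.2 - B.2) = _; ring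
  have eB' : B' = ((c * A.1 + a * C.1) / (a + c), (c * A.2 + a * C.2) / (a + c)) := by
    rw [hB']
    refine projLine_eq B A C a c ha.symm ?_ hac.ne'
    rw [ha', hc']; show (C.1 - A.1) * (C.1 - A.1) + (C.2 - A.2) * (C.2 - A.2) = _; ring
  have eC' : C' = ((b * A.1 + a * B.1) / (a + b), (b * A.2 + a * B.2) / (a + b)) := by
    rw [hC']
    refine projLine_eq C A B a b ?_ ?_ hab.ne'
    · rw [ha']; show (C.1 - A.1) * (B.1 - A.1) + (C.2 - A.2) * (B.2 - A.2) = _; ring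
    · rw [ha', hb']; show (B.1 - A.1) * (B.1 - A.1) + (B.2 - A.2) * (B.2 - A.2) = _; ring
  have eA1 : A'.1 = (c * B.1 + b * C.1) / (b + c) := by rw [eA']
  have eA2 : A'.2 = (c * B.2 + b * C.2) / (b + c) := by rw [eA']
  have eB1 : B'.1 = (c * A.1 + a * C.1) / (a + c) := by rw [eB']
  have eB2 : B'.2 = (c * A.2 + a * C.2) / (a + c) := by rw [eB']
  have eC1 : C'.1 = (b * A.1 + a * B.1) / (a + b) := by rw [eC']
  have eC2 : C'.2 = (b * A.2 + a * B.2) / (a + b) := by rw [eC']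
  -- the determinant of ABC
  set d := (B.1 - A.1) * (C.2 - A.2) - (B.2 - A.2) * (C.1 - A.1) with hd
  have hd2 : d ^ 2 = a * b + b * c + c * a := by
    rw [hd, ha', hb', hc']; ring
  have hs : (0:ℝ) < a * b + b * c + c * a := by positivity
  have hdne : d ≠ 0 := by
    intro h0
    rw [h0] at hd2; nlinarith
  have hdd : d = (B.1 - A.1) * (C.2 - A.2) - (B.2 - A.2) * (C.1 - A.1) := hd
  clear_value a b c d
  clear ha hb hc hd hA' hB' hC' hind
  -- affine independence of the orthic triangle
  have eBA1 : B'.1 - A'.1 = (-(c / (b + c))) * (B.1 - A.1)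
      + (a / (a + c) - b / (b + c)) * (C.1 - A.1) := by
    rw [eB1, eA1]; field_simp; ring
  have eBA2 : B'.2 - A'.2 = (-(c / (b + c))) * (B.2 - A.2)
      + (a / (a + c) - b / (b + c)) * (C.2 - A.2) := by
    rw [eB2, eA2]; field_simp; ring
  have eCA1 : C'.1 - A'.1 = (a / (a + b) - c / (b + c)) * (B.1 - A.1)
      + (-(b / (b + c))) * (C.1 - A.1) := by
    rw [eC1, eA1]; field_simp; ring
  have eCA2 : C'.2 - A'.2 = (a / (a + b) - c / (b + c)) * (B.2 - A.2)
      + (-(b / (b + c))) * (C.2 - A.2) := by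
    rw [eC2, eA2]; field_simp; ring
  have crossid : (B'.1 - A'.1) * (C'.2 - A'.2) - (B'.2 - A'.2) * (C'.1 - A'.1)
      = (2 * a * b * c / ((a + b) * (b + c) * (a + c))) * d := by
    rw [eBA1, eBA2, eCA1, eCA2, hdd]
    have hcoef : (-(c / (b + c))) * (-(b / (b + c)))
        - (a / (a + c) - b / (b + c)) * (a / (a + b) - c / (b + c))
        = 2 * a * b * c / ((a + b) * (b + c) * (a + c)) := by
      field_simp; ring
    rw [← hcoef]; ring
  have hcross : (B'.1 - A'.1) * (C'.2 - A'.2) - (B'.2 - A'.2) * (C'.1 - A'.1) ≠ 0 := by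
    rw [crossid]
    exact mul_ne_zero (by positivity) hdne
  refine ⟨affInd_of_cross hcross, ?_⟩
  -- side lengths of the orthic triangle
  have sab2 : Real.sqrt (a + b) ^ 2 = a + b := Real.sq_sqrt hab.le
  have sbc2 : Real.sqrt (b + c) ^ 2 = b + c := Real.sq_sqrt hbc.le
  have sac2 : Real.sqrt (a + c) ^ 2 = a + c := Real.sq_sqrt hac.le
  have sabpos : 0 < Real.sqrt (a + b) := Real.sqrt_pos.2 hab
  have sbcpos : 0 < Real.sqrt (b + c) := Real.sqrt_pos.2 hbc
  have sacpos : 0 < Real.sqrt (a + c) := Real.sqrt_pos.2 hac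
  have hD : (0:ℝ) < Real.sqrt (a + b) * Real.sqrt (b + c) * Real.sqrt (a + c) := by positivity
  have l1 : elen (B' - C') = a * (b + c) /
      (Real.sqrt (a + b) * Real.sqrt (b + c) * Real.sqrt (a + c)) := by
    have h1 : (B' - C').1 = (-(a / (a + b))) * (B.1 - A.1) + (a / (a + c)) * (C.1 - A.1) := by
      rw [Prod.fst_sub, eB1, eC1]; field_simp; ring
    have h2 : (B' - C').2 = (-(a / (a + b))) * (B.2 - A.2) + (a / (a + c)) * (C.2 - A.2) := by
      rw [Prod.snd_sub, eB2, eC2]; field_simp; ring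
    have hdot : dot (B' - C') (B' - C')
        = (a * (b + c) / (Real.sqrt (a + b) * Real.sqrt (b + c) * Real.sqrt (a + c))) ^ 2 := by
      have hsq : (a * (b + c) / (Real.sqrt (a + b) * Real.sqrt (b + c) * Real.sqrt (a + c))) ^ 2
          = a ^ 2 * (b + c) ^ 2 / ((a + b) * (b + c) * (a + c)) := by
        rw [div_pow, mul_pow, mul_pow, mul_pow, sab2, sbc2, sac2]
      rw [dot, h1, h2, dot_combo nu nv nuv, hsq]
      field_simp
      ring
    rw [elen, hdot]
    exact Real.sqrt_sq (by positivity)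
  have l2 : elen (A' - C') = b * (a + c) /
      (Real.sqrt (a + b) * Real.sqrt (b + c) * Real.sqrt (a + c)) := by
    have h1 : (A' - C').1 = (c / (b + c) - a / (a + b)) * (B.1 - A.1)
        + (b / (b + c)) * (C.1 - A.1) := by
      rw [Prod.fst_sub, eA1, eC1]; field_simp; ring
    have h2 : (A' - C').2 = (c / (b + c) - a / (a + b)) * (B.2 - A.2)
        + (b / (b + c)) * (C.2 - A.2) := by
      rw [Prod.snd_sub, eA2, eC2]; field_simp; ring
    have hdot : dot (A' - C') (A' - C')
        = (b * (a + c) / (Real.sqrt (a + b) * Real.sqrt (b + c) * Real.sqrt (a + c))) ^ 2 := by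
      have hsq : (b * (a + c) / (Real.sqrt (a + b) * Real.sqrt (b + c) * Real.sqrt (a + c))) ^ 2
          = b ^ 2 * (a + c) ^ 2 / ((a + b) * (b + c) * (a + c)) := by
        rw [div_pow, mul_pow, mul_pow, mul_pow, sab2, sbc2, sac2]
      rw [dot, h1, h2, dot_combo nu nv nuv, hsq]
      field_simp
      ring
    rw [elen, hdot]
    exact Real.sqrt_sq (by positivity)
  have l3 : elen (A' - B') = c * (a + b) /
      (Real.sqrt (a + b) * Real.sqrt (b + c) * Real.sqrt (a + c)) := by
    have h1 : (A' - B').1 = (c / (b + c)) * (B.1 - A.1)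
        + (b / (b + c) - a / (a + c)) * (C.1 - A.1) := by
      rw [Prod.fst_sub, eA1, eB1]; field_simp; ring
    have h2 : (A' - B').2 = (c / (b + c)) * (B.2 - A.2)
        + (b / (b + c) - a / (a + c)) * (C.2 - A.2) := by
      rw [Prod.snd_sub, eA2, eB2]; field_simp; ring
    have hdot : dot (A' - B') (A' - B')
        = (c * (a + b) / (Real.sqrt (a + b) * Real.sqrt (b + c) * Real.sqrt (a + c))) ^ 2 := by
      have hsq : (c * (a + b) / (Real.sqrt (a + b) * Real.sqrt (b + c) * Real.sqrt (a + c))) ^ 2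
          = c ^ 2 * (a + b) ^ 2 / ((a + b) * (b + c) * (a + c)) := by
        rw [div_pow, mul_pow, mul_pow, mul_pow, sab2, sbc2, sac2]
      rw [dot, h1, h2, dot_combo nu nv nuv, hsq]
      field_simp
      ring
    rw [elen, hdot]
    exact Real.sqrt_sq (by positivity)
  -- explicit coordinates of the orthocenter
  have hH1' : (H.1 - A.1) * (B.1 - C.1) + (H.2 - A.2) * (B.2 - C.2) = 0 := hH1
  have hH2' : (H.1 - B.1) * (A.1 - C.1) + (H.2 - B.2) * (A.2 - C.2) = 0 := hH2
  have keyx : H.1 * (a * b + b * c + c * a) = b * c * A.1 + c * a * B.1 + a * b * C.1 := by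
    rw [ha', hb', hc']
    linear_combination
      (-((B.1 - A.1) * (C.2 - A.2) - (B.2 - A.2) * (C.1 - A.1)) * (A.2 - C.2)) * hH1'
      + (((B.1 - A.1) * (C.2 - A.2) - (B.2 - A.2) * (C.1 - A.1)) * (B.2 - C.2)) * hH2'
  have keyy : H.2 * (a * b + b * c + c * a) = b * c * A.2 + c * a * B.2 + a * b * C.2 := by
    rw [ha', hb', hc']
    linear_combination
      (((B.1 - A.1) * (C.2 - A.2) - (B.2 - A.2) * (C.1 - A.1)) * (A.1 - C.1)) * hH1'
      + (-((B.1 - A.1) * (C.2 - A.2) - (B.2 - A.2) * (C.1 - A.1)) * (B.1 - C.1)) * hH2'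
  have Hx : H.1 = (b * c * A.1 + c * a * B.1 + a * b * C.1) / (a * b + b * c + c * a) := by
    rw [eq_div_iff hs.ne']; exact keyx
  have Hy : H.2 = (b * c * A.2 + c * a * B.2 + a * b * C.2) / (a * b + b * c + c * a) := by
    rw [eq_div_iff hs.ne']; exact keyy
  -- the incenter of the orthic triangle is the orthocenter
  refine Prod.ext ?_ ?_
  · rw [incenter]
    simp only [Prod.fst_add, Prod.smul_fst, smul_eq_mul]
    rw [l1, l2, l3, eA1, eB1, eC1, Hx]
    field_simp
    ring
  · rw [incenter]
    simp only [Prod.snd_add, Prod.smul_snd, smul_eq_mul]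
    rw [l1, l2, l3, eA2, eB2, eC2, Hy]
    field_simp
    ring
end
end

section
/- Let A, B, C be affinely independent points of the Euclidean plane forming a triangle that is obtuse at B, i.e., ⟪A−B, C−B⟫ < 0. Let A′ be the orthogonal projection of A onto the line through B and C, B′ the orthogonal projection of B onto the line through A and C, and C′ the orthogonal projection of C onto the line through A and B. Then A′, B′, C′ are affinely independent, and the incenter of triangle A′B′C′ equals B. -/
/-!
Put the obtuse vertex at the origin, `u = A - B`, `v = C - B`. The feet of the altitudes are then
`A' = B + (⟪u,v⟫/|v|²) v`, `C' = B + (⟪u,v⟫/|u|²) u` and `B'` on `AC`, and each side of the orthic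
triangle is the opposite side of `ABC` times the absolute cosine of the angle at the common vertex:
`B'C' = |BC| |cos A|`, `A'C' = |AC| |cos B|`, `A'B' = |AB| |cos C|`. As the triangle is obtuse at `B`,
`cos B < 0 < cos A, cos C`, and with these weights the combination of `A' - B`, `B' - B`, `C' - B`
cancels coefficient by coefficient in `u` and `v`, so the incenter is `B`. The same coordinates show
that the signed area of `A'B'C'` is `2⟪u,v⟫(|u|² - ⟪u,v⟫)(|v|² - ⟪u,v⟫) / (|u|²|v|²|v - u|²)` times
that of `ABC`, which is nonzero.
-/

noncomputable section

def wedge (p q : ℝ × ℝ) : ℝ := p.1 * q.2 - p.2 * q.1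

section Bilinear

variable (p q r : ℝ × ℝ) (t : ℝ)

lemma dot_comm : dot p q = dot q p := by unfold dot; ring

lemma dot_add_left : dot (p + q) r = dot p r + dot q r := by
  simp only [dot, Prod.fst_add, Prod.snd_add]; ring

lemma dot_sub_left : dot (p - q) r = dot p r - dot q r := by
  simp only [dot, Prod.fst_sub, Prod.snd_sub]; ring

lemma dot_neg_left : dot (-p) q = -dot p q := by
  simp only [dot, Prod.fst_neg, Prod.snd_neg]; ring

lemma dot_smul_left : dot (t • p) q = t * dot p q := by
  simp only [dot, Prod.smul_fst, Prod.smul_snd, smul_eq_mul]; ring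

lemma dot_sub_right : dot p (q - r) = dot p q - dot p r := by
  rw [dot_comm, dot_sub_left, dot_comm q, dot_comm r]

lemma dot_neg_right : dot p (-q) = -dot p q := by
  rw [dot_comm, dot_neg_left, dot_comm]

lemma dot_smul_right : dot p (t • q) = t * dot p q := by
  rw [dot_comm, dot_smul_left, dot_comm]

lemma wedge_add_left : wedge (p + q) r = wedge p r + wedge q r := by
  simp only [wedge, Prod.fst_add, Prod.snd_add]; ring

lemma wedge_sub_left : wedge (p - q) r = wedge p r - wedge q r := by
  simp only [wedge, Prod.fst_sub, Prod.snd_sub]; ring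

lemma wedge_smul_left : wedge (t • p) q = t * wedge p q := by
  simp only [wedge, Prod.smul_fst, Prod.smul_snd, smul_eq_mul]; ring

lemma wedge_add_right : wedge p (q + r) = wedge p q + wedge p r := by
  simp only [wedge, Prod.fst_add, Prod.snd_add]; ring

lemma wedge_sub_right : wedge p (q - r) = wedge p q - wedge p r := by
  simp only [wedge, Prod.fst_sub, Prod.snd_sub]; ring

lemma wedge_smul_right : wedge p (t • q) = t * wedge p q := by
  simp only [wedge, Prod.smul_fst, Prod.smul_snd, smul_eq_mul]; ring

lemma wedge_self : wedge p p = 0 := by unfold wedge; ring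

lemma wedge_anticomm : wedge q p = -wedge p q := by unfold wedge; ring

end Bilinear

lemma dot_self_eq_zero {p : ℝ × ℝ} : dot p p = 0 ↔ p = 0 := by
  refine ⟨fun h => ?_, fun h => by simp [h, dot]⟩
  unfold dot at h
  ext <;> simp only [Prod.fst_zero, Prod.snd_zero] <;>
    nlinarith [mul_self_nonneg p.1, mul_self_nonneg p.2]

lemma dot_self_pos {p : ℝ × ℝ} (hp : p ≠ 0) : 0 < dot p p :=
  (dot_self_nonneg p).lt_of_ne' (mt dot_self_eq_zero.1 hp)

lemma elen_neg (p : ℝ × ℝ) : elen (-p) = elen p := by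
  rw [elen, elen, dot_neg_left, dot_neg_right, neg_neg]

lemma dot_sub_self_sub (p q : ℝ × ℝ) : dot (q - p) (q - p) = dot p p + dot q q - 2 * dot p q := by
  simp only [dot_sub_left, dot_sub_right, dot_comm q p]
  ring

lemma elen_sub_sq (p q : ℝ × ℝ) : elen (q - p) ^ 2 = elen p ^ 2 + elen q ^ 2 - 2 * dot p q := by
  simp only [elen_sq, dot_sub_self_sub]

lemma elen_eq_of_dot_self_eq_sq {p : ℝ × ℝ} {r : ℝ} (hr : 0 ≤ r) (h : dot p p = r ^ 2) :
    elen p = r := by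
  rw [elen, h, Real.sqrt_sq hr]

lemma smul_eq_smul_of_wedge_eq_zero {u w : ℝ × ℝ} (h : wedge u w = 0) :
    dot u u • w = dot u w • u := by
  unfold wedge at h
  ext <;> simp only [dot, Prod.smul_fst, Prod.smul_snd, smul_eq_mul]
  · linear_combination (-u.2) * h
  · linear_combination u.1 * h

lemma collinear_iff_wedge_eq_zero (P Q R : ℝ × ℝ) :
    Collinear ℝ ({P, Q, R} : Set (ℝ × ℝ)) ↔ wedge (P - Q) (R - Q) = 0 := by
  constructor
  · intro h
    obtain ⟨w, hw⟩ := (collinear_iff_of_mem (p₀ := Q) (by simp)).1 h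
    obtain ⟨s, rfl⟩ := hw P (by simp)
    obtain ⟨t, rfl⟩ := hw R (by simp)
    simp only [vadd_eq_add, add_sub_cancel_right, wedge_smul_left, wedge_smul_right, wedge_self,
      mul_zero]
  · intro h
    rcases eq_or_ne R Q with rfl | hRQ
    · simpa using collinear_pair ℝ P R
    have hD : dot (R - Q) (R - Q) ≠ 0 := (dot_self_pos (sub_ne_zero.2 hRQ)).ne'
    have hPR : wedge (R - Q) (P - Q) = 0 := by rw [wedge_anticomm, h, neg_zero]
    apply collinear_insert_of_mem_affineSpan_pair
    convert AffineMap.lineMap_mem_affineSpan_pair (dot (R - Q) (P - Q) / dot (R - Q) (R - Q)) Q R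
    rw [AffineMap.lineMap_apply, vsub_eq_sub, vadd_eq_add, div_eq_inv_mul, mul_smul,
      ← smul_eq_smul_of_wedge_eq_zero hPR, inv_smul_smul₀ hD, sub_add_cancel]

lemma affineIndependent_iff_wedge_ne_zero (P Q R : ℝ × ℝ) :
    AffineIndependent ℝ ![P, Q, R] ↔ wedge (P - Q) (R - Q) ≠ 0 := by
  rw [affineIndependent_iff_not_collinear_set, collinear_iff_wedge_eq_zero]

lemma incenter_eq_of_sum_smul_sub_eq_zero {V₁ V₂ V₃ P : ℝ × ℝ}
    (hpos : elen (V₂ - V₃) + elen (V₁ - V₃) + elen (V₁ - V₂) ≠ 0)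
    (h : elen (V₂ - V₃) • (V₁ - P) + elen (V₁ - V₃) • (V₂ - P) + elen (V₁ - V₂) • (V₃ - P) = 0) :
    incenter V₁ V₂ V₃ = P := by
  rw [incenter, inv_smul_eq_iff₀ hpos]
  linear_combination (norm := module) h

lemma projLine_comm (P A B : ℝ × ℝ) : projLine P A B = projLine P B A := by
  obtain ⟨w, rfl⟩ : ∃ w, B = A + w := ⟨B - A, by abel⟩
  rcases eq_or_ne w 0 with rfl | hw
  · simp
  have hD : dot w w ≠ 0 := by rwa [Ne, dot_self_eq_zero]
  simp only [projLine, add_sub_cancel_left, sub_add_cancel_left, dot_neg_left, dot_neg_right,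
    neg_neg, dot_sub_left, dot_add_left]
  match_scalars <;> field_simp
  ring

lemma projLine_add_self_add (B u v : ℝ × ℝ) :
    projLine (B + u) B (B + v) = B + (dot u v / dot v v) • v := by
  simp [projLine]

lemma projLine_self_add_add (B u v : ℝ × ℝ) :
    projLine B (B + u) (B + v) =
      B + u + ((dot u u - dot u v) / dot (v - u) (v - u)) • (v - u) := by
  simp only [projLine, sub_add_cancel_left, add_sub_add_left_eq_sub, dot_neg_left, dot_sub_right,
    neg_sub_neg]

lemma left_ne_zero_of_dot_ne_zero {u v : ℝ × ℝ} (h : dot u v ≠ 0) : u ≠ 0 := by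
  rintro rfl
  simp [dot] at h

lemma right_ne_zero_of_dot_ne_zero {u v : ℝ × ℝ} (h : dot u v ≠ 0) : v ≠ 0 :=
  left_ne_zero_of_dot_ne_zero (by rwa [dot_comm])

lemma elen_projLine_sub_projLine (P Q R : ℝ × ℝ) :
    elen (projLine Q P R - projLine R P Q) =
      |dot (Q - P) (R - P)| * elen (R - Q) / (elen (Q - P) * elen (R - P)) := by
  obtain ⟨u, rfl⟩ : ∃ u, Q = P + u := ⟨Q - P, by abel⟩
  obtain ⟨v, rfl⟩ : ∃ v, R = P + v := ⟨R - P, by abel⟩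
  rw [projLine_add_self_add, projLine_add_self_add, add_sub_cancel_left, add_sub_cancel_left,
    add_sub_add_left_eq_sub, dot_comm v u]
  rcases eq_or_ne (dot u v) 0 with h | h
  · rw [h]
    simp [elen, dot]
  have hu := (dot_self_pos (left_ne_zero_of_dot_ne_zero h)).ne'
  have hv := (dot_self_pos (right_ne_zero_of_dot_ne_zero h)).ne'
  apply elen_eq_of_dot_self_eq_sq (by unfold elen; positivity)
  rw [div_pow, mul_pow, mul_pow, sq_abs, elen_sq, elen_sq, elen_sq, add_sub_add_left_eq_sub]
  simp only [dot_sub_left, dot_sub_right, dot_smul_left, dot_smul_right, dot_comm v u]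
  field_simp
  ring

lemma incenter_orthic_of_dot_neg (A B C : ℝ × ℝ) (hB : dot (A - B) (C - B) < 0) :
    incenter (projLine A B C) (projLine B A C) (projLine C A B) = B := by
  obtain ⟨u, rfl⟩ : ∃ u, A = B + u := ⟨A - B, by abel⟩
  obtain ⟨v, rfl⟩ : ∃ v, C = B + v := ⟨C - B, by abel⟩
  simp only [add_sub_cancel_left] at hB
  have hu := left_ne_zero_of_dot_ne_zero hB.ne
  have hv := right_ne_zero_of_dot_ne_zero hB.ne
  have huv : v - u ≠ 0 := sub_ne_zero.2 fun h => by
    rw [h] at hB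
    linarith [dot_self_nonneg u]
  have hcosA : 0 < dot u u - dot u v := by linarith [dot_self_nonneg u]
  have hcosC : 0 < dot v v - dot u v := by linarith [dot_self_nonneg v]
  have ha := elen_pos hu
  have hc := elen_pos hv
  have he := elen_pos huv
  have side₁ : elen (projLine B (B + u) (B + v) - projLine (B + v) (B + u) B) =
      (dot u u - dot u v) * elen v / (elen u * elen (v - u)) := by
    rw [elen_projLine_sub_projLine]
    simp only [sub_add_cancel_left, add_sub_cancel_left, add_sub_add_left_eq_sub, elen_neg,
      dot_neg_left, dot_sub_right, neg_sub_neg, abs_of_pos hcosA]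
  have side₂ : elen (projLine (B + u) B (B + v) - projLine (B + v) (B + u) B) =
      -dot u v * elen (v - u) / (elen u * elen v) := by
    rw [projLine_comm (B + v), elen_projLine_sub_projLine]
    simp only [add_sub_cancel_left, add_sub_add_left_eq_sub, abs_of_neg hB]
  have side₃ : elen (projLine (B + u) B (B + v) - projLine B (B + u) (B + v)) =
      (dot v v - dot u v) * elen u / (elen v * elen (v - u)) := by
    rw [projLine_comm (B + u), projLine_comm B, elen_projLine_sub_projLine]
    simp only [add_sub_add_left_eq_sub, sub_add_cancel_left, elen_neg, dot_neg_right,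
      dot_sub_left, neg_sub, elen_sub_comm u v, abs_of_pos hcosC,
      mul_comm (elen (v - u))]
  apply incenter_eq_of_sum_smul_sub_eq_zero
  · rw [side₁, side₂, side₃]
    have := neg_pos.2 hB
    positivity
  rw [side₁, side₂, side₃, projLine_add_self_add, projLine_comm (B + v), projLine_add_self_add,
    projLine_self_add_add, dot_comm v u, ← elen_sq u, ← elen_sq v, ← elen_sq (v - u)]
  match_scalars <;> field_simp
  · ring
  · ring
  · linear_combination (-dot u v) * elen_sub_sq u v

lemma affineIndependent_orthic_of_dot_neg (A B C : ℝ × ℝ) (hind : AffineIndependent ℝ ![A, B, C])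
    (hB : dot (A - B) (C - B) < 0) :
    AffineIndependent ℝ ![projLine A B C, projLine B A C, projLine C A B] := by
  rw [affineIndependent_iff_wedge_ne_zero] at hind ⊢
  obtain ⟨u, rfl⟩ : ∃ u, A = B + u := ⟨A - B, by abel⟩
  obtain ⟨v, rfl⟩ : ∃ v, C = B + v := ⟨C - B, by abel⟩
  simp only [add_sub_cancel_left] at hind hB
  have hX := dot_self_pos (left_ne_zero_of_dot_ne_zero hB.ne)
  have hY := dot_self_pos (right_ne_zero_of_dot_ne_zero hB.ne)
  have hZ : 0 < dot (v - u) (v - u) := by rw [dot_sub_self_sub]; linarith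
  have hcosA : 0 < dot u u - dot u v := by linarith
  have hcosC : 0 < dot v v - dot u v := by linarith
  have key : wedge (projLine (B + u) B (B + v) - projLine B (B + u) (B + v))
      (projLine (B + v) (B + u) B - projLine B (B + u) (B + v)) =
      2 * dot u v * (dot u u - dot u v) * (dot v v - dot u v) /
        (dot u u * dot v v * dot (v - u) (v - u)) * wedge u v := by
    rw [projLine_add_self_add, projLine_comm (B + v), projLine_add_self_add,
      projLine_self_add_add, dot_comm v u]
    simp only [add_sub_add_left_eq_sub, add_assoc, wedge_sub_left,
      wedge_sub_right, wedge_add_left, wedge_add_right, wedge_smul_left, wedge_smul_right,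
      wedge_self, wedge_anticomm u v]
    field_simp
    rw [dot_sub_self_sub]
    ring
  rw [key]
  have hnum : 2 * dot u v * (dot u u - dot u v) * (dot v v - dot u v) ≠ 0 :=
    mul_ne_zero (mul_ne_zero (mul_ne_zero two_ne_zero hB.ne) hcosA.ne') hcosC.ne'
  exact mul_ne_zero (div_ne_zero hnum (by positivity)) hind

/-- For a triangle `ABC` obtuse at `B`, the feet `A′, B′, C′` of the altitudes
are affinely independent and the incenter of the orthic triangle `A′B′C′` is
pinned to the obtuse vertex `B`. -/
theorem stmt_8 (A B C : ℝ × ℝ)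
    (hind : AffineIndependent ℝ ![A, B, C])
    (hB : dot (A - B) (C - B) < 0)
    (A' B' C' : ℝ × ℝ)
    (hA' : A' = projLine A B C) (hB' : B' = projLine B A C)
    (hC' : C' = projLine C A B) :
    AffineIndependent ℝ ![A', B', C'] ∧ incenter A' B' C' = B := by
  subst hA' hB' hC'
  exact ⟨affineIndependent_orthic_of_dot_neg A B C hind hB, incenter_orthic_of_dot_neg A B C hB⟩
end
end

section
/- Let A, B, C be affinely independent points of the Euclidean plane forming a triangle that is obtuse at B, i.e., ⟪A−B, C−B⟫ < 0, and let H be the orthocenter of triangle ABC. Then A, H, C are affinely independent, the triangle AHC is acute (all three of ⟪H−A, C−A⟫, ⟪A−H, C−H⟫, ⟪A−C, H−C⟫ are positive), and the orthocenter of triangle AHC is B. -/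
/-!
With `u = A - B`, `v = C - B`, `h = H - B`, the orthocenter conditions say
`⟪h, u⟫ = ⟪h, v⟫ = ⟪u, v⟫ =: p`, and `p < 0` as `ABC` is obtuse at `B`. These same relations say
that `B` is the orthocenter of `AHC`, and they turn the dot products at the vertices `A, H, C`
of `AHC` into `|u|² - p`, `|h|² - p`, `|v|² - p`, all positive. A triangle with three acute
angles is nondegenerate, since of three collinear points the middle one sees the other two at a
non-acute angle.
-/

noncomputable section

lemma dot_smul_smul (a b : ℝ) (v : ℝ × ℝ) : dot (a • v) (b • v) = a * b * dot v v := by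
  simp only [dot, Prod.smul_fst, Prod.smul_snd, smul_eq_mul]; ring

lemma affineIndependent_of_dot_pos {P Q R : ℝ × ℝ} (hP : 0 < dot (Q - P) (R - P))
    (hQ : 0 < dot (P - Q) (R - Q)) (hR : 0 < dot (P - R) (Q - R)) :
    AffineIndependent ℝ ![P, Q, R] := by
  rw [affineIndependent_iff_not_collinear_set,
    collinear_iff_of_mem (Set.mem_insert P {Q, R})]
  rintro ⟨v, hv⟩
  obtain ⟨a, rfl⟩ := hv Q (by simp)
  obtain ⟨b, rfl⟩ := hv R (by simp)
  have hs := dot_self_nonneg v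
  -- the three dot products are `a b |v|²`, `a (a - b) |v|²`, `b (b - a) |v|²`, and the last two
  -- have product `-a b (a - b)² |v|⁴`
  simp only [vadd_eq_add, add_sub_cancel_right, add_sub_add_right_eq_sub, sub_add_cancel_right,
    ← sub_smul, ← neg_smul, dot_smul_smul] at hP hQ hR
  nlinarith [mul_pos hQ hR, mul_nonneg hP.le (mul_nonneg (sq_nonneg (a - b)) hs)]

namespace IsOrthocenter

variable {A B C H : ℝ × ℝ}

lemma swap_vertex (hH : IsOrthocenter A B C H) : IsOrthocenter A H C B := by
  obtain ⟨h₁, h₂⟩ := hH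
  simp only [IsOrthocenter, dot, Prod.fst_sub, Prod.snd_sub] at h₁ h₂ ⊢
  constructor
  · linear_combination h₁ - h₂
  · linear_combination -h₂

lemma dot_orthocenter_sub_left (hH : IsOrthocenter A B C H) :
    dot (H - A) (C - A) = dot (A - B) (A - B) - dot (A - B) (C - B) := by
  obtain ⟨h₁, h₂⟩ := hH
  simp only [dot, Prod.fst_sub, Prod.snd_sub] at h₁ h₂ ⊢
  linear_combination -h₂

lemma dot_sub_orthocenter (hH : IsOrthocenter A B C H) :
    dot (A - H) (C - H) = dot (H - B) (H - B) - dot (A - B) (C - B) := by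
  obtain ⟨h₁, h₂⟩ := hH
  simp only [dot, Prod.fst_sub, Prod.snd_sub] at h₁ h₂ ⊢
  linear_combination 2 * h₁ - h₂

lemma dot_orthocenter_sub_right (hH : IsOrthocenter A B C H) :
    dot (A - C) (H - C) = dot (C - B) (C - B) - dot (A - B) (C - B) := by
  obtain ⟨h₁, h₂⟩ := hH
  simp only [dot, Prod.fst_sub, Prod.snd_sub] at h₁ h₂ ⊢
  linear_combination h₂

end IsOrthocenter

theorem stmt_9_general (A B C H : ℝ × ℝ)
    (hB : dot (A - B) (C - B) < 0)
    (hH : IsOrthocenter A B C H) :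
    AffineIndependent ℝ ![A, H, C] ∧
    0 < dot (H - A) (C - A) ∧
    0 < dot (A - H) (C - H) ∧
    0 < dot (A - C) (H - C) ∧
    IsOrthocenter A H C B := by
  have hA : 0 < dot (H - A) (C - A) := by
    rw [hH.dot_orthocenter_sub_left]; linarith [dot_self_nonneg (A - B)]
  have hH' : 0 < dot (A - H) (C - H) := by
    rw [hH.dot_sub_orthocenter]; linarith [dot_self_nonneg (H - B)]
  have hC : 0 < dot (A - C) (H - C) := by
    rw [hH.dot_orthocenter_sub_right]; linarith [dot_self_nonneg (C - B)]
  exact ⟨affineIndependent_of_dot_pos hA hH' hC, hA, hH', hC, hH.swap_vertex⟩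

/-- For a triangle `ABC` obtuse at `B` with orthocenter `H`, the points
`A, H, C` are affinely independent, the triangle `AHC` is acute, and the
orthocenter of `AHC` is `B`. -/
theorem stmt_9 (A B C H : ℝ × ℝ)
    (hind : AffineIndependent ℝ ![A, B, C])
    (hB : dot (A - B) (C - B) < 0)
    (hH : IsOrthocenter A B C H) :
    AffineIndependent ℝ ![A, H, C] ∧
    0 < dot (H - A) (C - A) ∧
    0 < dot (A - H) (C - H) ∧
    0 < dot (A - C) (H - C) ∧
    IsOrthocenter A H C B :=
  stmt_9_general A B C H hB hH
end
end

section
/- Let a, u, v be real numbers with v > 0 and a + u ≥ v. Let A′ = (−u, 0), and let B′ = ((−u(a+u)² + v²(2a+u))/((a+u)² + v²), v((a+u)² − v²)/((a+u)² + v²)) and C′ = ((−u(a+u)² + v²(2a+u))/((a+u)² + v²), −v((a+u)² − v²)/((a+u)² + v²)) be the feet of the altitudes of the isosceles triangle A = (a,0), B = (−u, v), C = (−u, −v). Then ⟪B′ − A′, C′ − A′⟫ = 0 if and only if (a+u)² − v(2a + 2u + v) = 0. -/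
noncomputable section

/-- The orthic triangle `A′B′C′` of the isosceles triangle
`(a,0), (−u,v), (−u,−v)` (with `v > 0`, `a + u ≥ v`) has a right angle at `A′`
iff `(a+u)² − v(2a + 2u + v) = 0`. -/
theorem stmt_11 (a u v : ℝ) (hv : 0 < v) (hau : v ≤ a + u)
    (A' B' C' : ℝ × ℝ)
    (hA' : A' = (-u, 0))
    (hB' : B' =
      ((-u * (a + u) ^ 2 + v ^ 2 * (2 * a + u)) / ((a + u) ^ 2 + v ^ 2),
        v * ((a + u) ^ 2 - v ^ 2) / ((a + u) ^ 2 + v ^ 2)))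
    (hC' : C' =
      ((-u * (a + u) ^ 2 + v ^ 2 * (2 * a + u)) / ((a + u) ^ 2 + v ^ 2),
        -(v * ((a + u) ^ 2 - v ^ 2) / ((a + u) ^ 2 + v ^ 2)))) :
    dot (B' - A') (C' - A') = 0 ↔
      (a + u) ^ 2 - v * (2 * a + 2 * u + v) = 0 := by
  subst hA' hB' hC'
  have hd : (a + u) ^ 2 + v ^ 2 ≠ 0 := by positivity
  have hpos : 0 < (a + u) ^ 2 + 2 * v * (a + u) - v ^ 2 := by nlinarith
  simp only [dot, Prod.fst_sub, Prod.snd_sub]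
  have key : ((-u * (a + u) ^ 2 + v ^ 2 * (2 * a + u)) / ((a + u) ^ 2 + v ^ 2) - -u) *
      ((-u * (a + u) ^ 2 + v ^ 2 * (2 * a + u)) / ((a + u) ^ 2 + v ^ 2) - -u) +
      (v * ((a + u) ^ 2 - v ^ 2) / ((a + u) ^ 2 + v ^ 2) - 0) *
      (-(v * ((a + u) ^ 2 - v ^ 2) / ((a + u) ^ 2 + v ^ 2)) - 0) =
      -(v ^ 2 * ((a + u) ^ 2 - 2 * v * (a + u) - v ^ 2) *
        ((a + u) ^ 2 + 2 * v * (a + u) - v ^ 2)) / ((a + u) ^ 2 + v ^ 2) ^ 2 := by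
    field_simp
    ring
  rw [key]
  constructor
  · intro h
    have h2 : v ^ 2 * ((a + u) ^ 2 - 2 * v * (a + u) - v ^ 2) *
        ((a + u) ^ 2 + 2 * v * (a + u) - v ^ 2) = 0 := by
      have := div_eq_zero_iff.mp h
      rcases this with h' | h'
      · linarith [neg_eq_zero.mp h']
      · exact absurd h' (by positivity)
    have hv2 : v ^ 2 ≠ 0 := by positivity
    have := mul_eq_zero.mp h2
    rcases this with h' | h'
    · rcases mul_eq_zero.mp h' with h'' | h''
      · exact absurd h'' hv2
      · nlinarith
    · nlinarith
  · intro h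
    have : (a + u) ^ 2 - 2 * v * (a + u) - v ^ 2 = 0 := by nlinarith
    rw [this]
    ring
end
end

section
/- Let a > b > 0 be real numbers, δ := √(a⁴ − a²b² + b⁴), u := a(δ − b²)/(a² − b²), and v := b²·√(2δ − a² − b²)/(a² − b²). Then (a+u)² − v(2a + 2u + v) = 0 if and only if 97a⁸ − 52a⁶b² − 122a⁴b⁴ + 12a²b⁶ + b⁸ = 0. -/
private lemma sgn_T (x y : ℝ) (hy : 0 < y) (h : 10*y < 7*x) :
    0 < 97*x^4 - 52*x^3*y - 122*x^2*y^2 + 12*x*y^3 + y^4 := by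
  nlinarith [mul_pos hy hy, mul_pos (mul_pos hy hy) hy,
    mul_nonneg (mul_nonneg (sub_pos.2 h).le (sub_pos.2 h).le) (mul_pos hy hy).le,
    mul_nonneg (sub_pos.2 h).le (mul_pos (mul_pos hy hy) hy).le,
    mul_nonneg (mul_nonneg (sub_pos.2 h).le (sub_pos.2 h).le) (mul_nonneg (sub_pos.2 h).le (sub_pos.2 h).le),
    mul_nonneg (mul_nonneg (mul_nonneg (sub_pos.2 h).le (sub_pos.2 h).le) (sub_pos.2 h).le) hy.le]

private lemma sgn_D (x y : ℝ) (hy : 0 < y) (hyx : y < x) (h : 7*x ≤ 10*y) :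
    8*x^5 - 36*x^4*y + 48*x^3*y^2 + 8*x^2*y^3 - 88*x*y^4 - 4*y^5 < 0 := by
  have hx : 0 < x := hy.trans hyx
  have hs : 0 ≤ 10*y - 7*x := by linarith
  nlinarith [mul_pos (mul_pos (mul_pos (mul_pos hx hx) hx) hx) hx,
    mul_nonneg hs (mul_pos (mul_pos (mul_pos hx hx) hx) hx).le,
    mul_nonneg (mul_nonneg hs hs) (mul_pos (mul_pos hx hx) hx).le,
    mul_nonneg (mul_nonneg (mul_nonneg hs hs) hs) (mul_pos hx hx).le,
    mul_nonneg (mul_nonneg (mul_nonneg (mul_nonneg hs hs) hs) hs) hx.le,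
    mul_nonneg (mul_nonneg (mul_nonneg (mul_nonneg hs hs) hs) hs) hs]

private lemma sgn_C (x y : ℝ) (hy : 0 < y) (hyx : y < x) (h : 7*x ≤ 10*y) :
    0 < 8*x^6 - 40*x^5*y + 69*x^4*y^2 - 28*x^3*y^3 - 26*x^2*y^4 + 76*x*y^5 + 5*y^6 := by
  have hx : 0 < x := hy.trans hyx
  have hs : 0 ≤ 10*y - 7*x := by linarith
  nlinarith [mul_pos (mul_pos (mul_pos (mul_pos (mul_pos hx hx) hx) hx) hx) hx,
    mul_nonneg hs (mul_pos (mul_pos (mul_pos (mul_pos hx hx) hx) hx) hx).le,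
    mul_nonneg (mul_nonneg hs hs) (mul_pos (mul_pos (mul_pos hx hx) hx) hx).le,
    mul_nonneg (mul_nonneg (mul_nonneg hs hs) hs) (mul_pos (mul_pos hx hx) hx).le,
    mul_nonneg (mul_nonneg (mul_nonneg (mul_nonneg hs hs) hs) hs) (mul_pos hx hx).le,
    mul_nonneg (mul_nonneg (mul_nonneg (mul_nonneg (mul_nonneg hs hs) hs) hs) hs) hx.le,
    mul_nonneg (mul_nonneg (mul_nonneg (mul_nonneg (mul_nonneg hs hs) hs) hs) hs) hs]

private lemma sgn_R (x y : ℝ) (hy : 0 < y) (hyx : y < x) :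
    0 < 2*x^3 - 5*x^2*y + 8*x*y^2 + 3*y^3 := by
  have hx : 0 < x := hy.trans hyx
  nlinarith [sq_nonneg (2*x - 5*y), mul_pos (mul_pos hy hy) hy, mul_pos hx (mul_pos hy hy),
    mul_nonneg (sq_nonneg (2*x-5*y)) hx.le, mul_pos (mul_pos hx hx) hx]

private lemma final_step (P q : ℝ) (hP : 0 < P) (hq : 0 ≤ q)
    (hM : 0 < P^2 - 3*q^2) (hM2 : (P^2 - 3*q^2)^2 = 8*q^4) :
    P^2 - 2*q*P - q^2 = 0 := by
  have hqpos : 0 < q := by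
    rcases hq.lt_or_eq with h | h
    · exact h
    · exfalso; rw [← h] at hM2; nlinarith
  have hfac : (P^2 - 2*q*P - q^2)*(P^2 + 2*q*P - q^2) = 0 := by linear_combination hM2
  have h2 : 0 < P^2 + 2*q*P - q^2 := by nlinarith [mul_pos hqpos hP]
  exact (mul_eq_zero.1 hfac).resolve_right h2.ne'

set_option maxHeartbeats 1000000 in
/-- For the elliptic billiard with semi-axes `a > b > 0`, with
`δ = √(a⁴ − a²b² + b⁴)`, `u = a(δ − b²)/(a² − b²)` and
`v = b²√(2δ − a² − b²)/(a² − b²)` (so that `(a,0), (−u,v), (−u,−v)` is the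
sideways isosceles 3-periodic), the right-angle condition
`(a+u)² − v(2a + 2u + v) = 0` for its orthic triangle holds iff
`97a⁸ − 52a⁶b² − 122a⁴b⁴ + 12a²b⁶ + b⁸ = 0`. -/
theorem stmt_12 (a b : ℝ) (hb : 0 < b) (hab : b < a)
    (δ u v : ℝ)
    (hδ : δ = Real.sqrt (a ^ 4 - a ^ 2 * b ^ 2 + b ^ 4))
    (hu : u = a * (δ - b ^ 2) / (a ^ 2 - b ^ 2))
    (hv : v = b ^ 2 * Real.sqrt (2 * δ - a ^ 2 - b ^ 2) / (a ^ 2 - b ^ 2)) :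
    (a + u) ^ 2 - v * (2 * a + 2 * u + v) = 0 ↔
      97 * a ^ 8 - 52 * a ^ 6 * b ^ 2 - 122 * a ^ 4 * b ^ 4
        + 12 * a ^ 2 * b ^ 6 + b ^ 8 = 0 := by
  have ha : 0 < a := hb.trans hab
  have hb2 : 0 < b^2 := by positivity
  have hk : 0 < a^2 - b^2 := by nlinarith
  have harg : 0 ≤ a^4 - a^2*b^2 + b^4 := by nlinarith [sq_nonneg (a^2 - b^2), sq_nonneg (a*b)]
  have hd2 : δ^2 = a^4 - a^2*b^2 + b^4 := by
    rw [hδ]; rw [show a ^ 4 - a ^ 2 * b ^ 2 + b ^ 4 = a^4 - a^2*b^2 + b^4 by ring]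
    exact Real.sq_sqrt harg
  have hdpos : 0 < δ := by
    rw [hδ]; apply Real.sqrt_pos.2; nlinarith [sq_nonneg (a^2 - b^2)]
  have h2d : 0 ≤ 2*δ - a^2 - b^2 := by
    by_contra h
    push_neg at h
    nlinarith [sq_nonneg (a^2 - b^2)]
  set w := Real.sqrt (2 * δ - a ^ 2 - b ^ 2) with hwdef
  have hw : 0 ≤ w := Real.sqrt_nonneg _
  have hw2 : w^2 = 2*δ - a^2 - b^2 := by
    rw [hwdef]; rw [show 2 * δ - a ^ 2 - b ^ 2 = 2*δ - a^2 - b^2 by ring]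
    exact Real.sq_sqrt h2d
  have hPpos : 0 < (a*(a^2 - 2*b^2 + δ)) := by
    have h1 : 0 < a^2 - 2*b^2 + δ := by
      by_contra h
      push_neg at h
      nlinarith [mul_pos hb2 hk]
    exact mul_pos ha h1
  have hqnn : 0 ≤ (b^2*w) := mul_nonneg hb2.le hw
  have hq2 : (b^2*w)^2 = b^4*(2*δ - a^2 - b^2) := by linear_combination b^4*hw2
  have hRS : (a*(a^2 - 2*b^2 + δ))^2 - 3*(b^2*w)^2 = (2*a^6 - 5*a^4*b^2 + 8*a^2*b^4 + 3*b^6) + (2*a^4 - 4*a^2*b^2 - 6*b^4)*δ := by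
    linear_combination a^2*hd2 - 3*b^4*hw2
  have hexp : (a + u) ^ 2 - v * (2 * a + 2 * u + v)
      = ((a*(a^2 - 2*b^2 + δ))^2 - 2*(b^2*w)*(a*(a^2 - 2*b^2 + δ)) - (b^2*w)^2) / (a^2 - b^2)^2 := by
    rw [hu, hv]
    field_simp
    ring
  have hiff0 : ((a + u) ^ 2 - v * (2 * a + 2 * u + v) = 0)
      ↔ (a*(a^2 - 2*b^2 + δ))^2 - 2*(b^2*w)*(a*(a^2 - 2*b^2 + δ)) - (b^2*w)^2 = 0 := by
    rw [hexp, div_eq_zero_iff]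
    constructor
    · rintro (h | h)
      · exact h
      · exact absurd h (by positivity)
    · exact fun h => Or.inl h
  rw [hiff0]
  constructor
  · -- forward: E0 = 0 → T = 0
    intro hE
    have hM2 : ((a*(a^2 - 2*b^2 + δ))^2 - 3*(b^2*w)^2)^2 = 8*(b^2*w)^4 := by
      linear_combination ((a*(a^2 - 2*b^2 + δ))^2 + 2*(b^2*w)*(a*(a^2 - 2*b^2 + δ)) - (b^2*w)^2) * hE
    have hCd : (8*a^12 - 40*a^10*b^2 + 69*a^8*b^4 - 28*a^6*b^6 - 26*a^4*b^8 + 76*a^2*b^10 + 5*b^12) + (8*a^10 - 36*a^8*b^2 + 48*a^6*b^4 + 8*a^4*b^6 - 88*a^2*b^8 - 4*b^10)*δ = 0 := by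
      linear_combination hM2 - ((a*(a^2 - 2*b^2 + δ))^2 - 3*(b^2*w)^2 + (2*a^6 - 5*a^4*b^2 + 8*a^2*b^4 + 3*b^6) + (2*a^4 - 4*a^2*b^2 - 6*b^4)*δ)*hRS
        + 8*((b^2*w)^2 + b^4*(2*δ - a^2 - b^2))*hq2 + (32*b^8 - (2*a^4 - 4*a^2*b^2 - 6*b^4)^2)*hd2
    have hC2 : (8*a^12 - 40*a^10*b^2 + 69*a^8*b^4 - 28*a^6*b^6 - 26*a^4*b^8 + 76*a^2*b^10 + 5*b^12)^2 = (8*a^10 - 36*a^8*b^2 + 48*a^6*b^4 + 8*a^4*b^6 - 88*a^2*b^8 - 4*b^10)^2*(a^4 - a^2*b^2 + b^4) := by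
      linear_combination ((8*a^12 - 40*a^10*b^2 + 69*a^8*b^4 - 28*a^6*b^6 - 26*a^4*b^8 + 76*a^2*b^10 + 5*b^12) - (8*a^10 - 36*a^8*b^2 + 48*a^6*b^4 + 8*a^4*b^6 - 88*a^2*b^8 - 4*b^10)*δ)*hCd + (8*a^10 - 36*a^8*b^2 + 48*a^6*b^4 + 8*a^4*b^6 - 88*a^2*b^8 - 4*b^10)^2*hd2
    have hTz : (9*b^8*(a^2-b^2)^4) * (97*a^8 - 52*a^6*b^2 - 122*a^4*b^4 + 12*a^2*b^6 + b^8) = 0 := by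
      linear_combination hC2
    have hpos : (0:ℝ) < 9*b^8*(a^2-b^2)^4 := by
      exact mul_pos (by positivity) (pow_pos hk 4)
    have := (mul_eq_zero.1 hTz).resolve_left hpos.ne'
    linarith [this]
  · -- backward: T = 0 → E0 = 0
    intro hT
    have hT' : (97*a^8 - 52*a^6*b^2 - 122*a^4*b^4 + 12*a^2*b^6 + b^8) = 0 := by linarith [hT]
    have h710 : 7*a^2 ≤ 10*b^2 := by
      by_contra h
      push_neg at h
      have := sgn_T (a^2) (b^2) hb2 h
      linarith
    have hDneg : (8*a^10 - 36*a^8*b^2 + 48*a^6*b^4 + 8*a^4*b^6 - 88*a^2*b^8 - 4*b^10) < 0 := by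
      have := sgn_D (a^2) (b^2) hb2 (by linarith) h710
      linarith [this]
    have hCpos : 0 < (8*a^12 - 40*a^10*b^2 + 69*a^8*b^4 - 28*a^6*b^6 - 26*a^4*b^8 + 76*a^2*b^10 + 5*b^12) := by
      have := sgn_C (a^2) (b^2) hb2 (by linarith) h710
      linarith [this]
    have hC2 : (8*a^12 - 40*a^10*b^2 + 69*a^8*b^4 - 28*a^6*b^6 - 26*a^4*b^8 + 76*a^2*b^10 + 5*b^12)^2 = (8*a^10 - 36*a^8*b^2 + 48*a^6*b^4 + 8*a^4*b^6 - 88*a^2*b^8 - 4*b^10)^2*(a^4 - a^2*b^2 + b^4) := by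
      linear_combination (9*b^8*(a^2-b^2)^4) * hT'
    have hfac : ((8*a^12 - 40*a^10*b^2 + 69*a^8*b^4 - 28*a^6*b^6 - 26*a^4*b^8 + 76*a^2*b^10 + 5*b^12) + (8*a^10 - 36*a^8*b^2 + 48*a^6*b^4 + 8*a^4*b^6 - 88*a^2*b^8 - 4*b^10)*δ)*((8*a^12 - 40*a^10*b^2 + 69*a^8*b^4 - 28*a^6*b^6 - 26*a^4*b^8 + 76*a^2*b^10 + 5*b^12) - (8*a^10 - 36*a^8*b^2 + 48*a^6*b^4 + 8*a^4*b^6 - 88*a^2*b^8 - 4*b^10)*δ) = 0 := by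
      linear_combination hC2 - (8*a^10 - 36*a^8*b^2 + 48*a^6*b^4 + 8*a^4*b^6 - 88*a^2*b^8 - 4*b^10)^2*hd2
    have hCmD : 0 < (8*a^12 - 40*a^10*b^2 + 69*a^8*b^4 - 28*a^6*b^6 - 26*a^4*b^8 + 76*a^2*b^10 + 5*b^12) - (8*a^10 - 36*a^8*b^2 + 48*a^6*b^4 + 8*a^4*b^6 - 88*a^2*b^8 - 4*b^10)*δ := by nlinarith [mul_pos (neg_pos.2 hDneg) hdpos]
    have hCd : (8*a^12 - 40*a^10*b^2 + 69*a^8*b^4 - 28*a^6*b^6 - 26*a^4*b^8 + 76*a^2*b^10 + 5*b^12) + (8*a^10 - 36*a^8*b^2 + 48*a^6*b^4 + 8*a^4*b^6 - 88*a^2*b^8 - 4*b^10)*δ = 0 := (mul_eq_zero.1 hfac).resolve_right hCmD.ne'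
    have hRpos : 0 < 2*(a^2)^3 - 5*(a^2)^2*(b^2) + 8*(a^2)*(b^2)^2 + 3*(b^2)^3 :=
      sgn_R (a^2) (b^2) hb2 (by linarith)
    have hGpos : 0 < ((2*a^6 - 5*a^4*b^2 + 8*a^2*b^4 + 3*b^6) + (2*a^4 - 4*a^2*b^2 - 6*b^4)*δ)*((2*a^6 - 5*a^4*b^2 + 8*a^2*b^4 + 3*b^6) - (2*a^4 - 4*a^2*b^2 - 6*b^4)*δ) := by
      have hid : ((2*a^6 - 5*a^4*b^2 + 8*a^2*b^4 + 3*b^6) + (2*a^4 - 4*a^2*b^2 - 6*b^4)*δ)*((2*a^6 - 5*a^4*b^2 + 8*a^2*b^4 + 3*b^6) - (2*a^4 - 4*a^2*b^2 - 6*b^4)*δ) = 9*b^4*(5*a^2+3*b^2)*(a^2-b^2)^3 := by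
        linear_combination (-(2*a^4 - 4*a^2*b^2 - 6*b^4)^2)*hd2
      rw [hid]
      exact mul_pos (by positivity) (pow_pos hk 3)
    have hRSpos : 0 < (2*a^6 - 5*a^4*b^2 + 8*a^2*b^4 + 3*b^6) + (2*a^4 - 4*a^2*b^2 - 6*b^4)*δ := by
      by_contra hA
      push_neg at hA
      have hB : 0 < (2*a^6 - 5*a^4*b^2 + 8*a^2*b^4 + 3*b^6) - (2*a^4 - 4*a^2*b^2 - 6*b^4)*δ := by nlinarith
      nlinarith [mul_pos hB hB]
    have hMpos : 0 < (a*(a^2 - 2*b^2 + δ))^2 - 3*(b^2*w)^2 := by rw [hRS]; exact hRSpos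
    have hM2 : ((a*(a^2 - 2*b^2 + δ))^2 - 3*(b^2*w)^2)^2 = 8*(b^2*w)^4 := by
      linear_combination hCd + ((a*(a^2 - 2*b^2 + δ))^2 - 3*(b^2*w)^2 + (2*a^6 - 5*a^4*b^2 + 8*a^2*b^4 + 3*b^6) + (2*a^4 - 4*a^2*b^2 - 6*b^4)*δ)*hRS
        - 8*((b^2*w)^2 + b^4*(2*δ - a^2 - b^2))*hq2 - (32*b^8 - (2*a^4 - 4*a^2*b^2 - 6*b^4)^2)*hd2
    exact final_step _ _ hPpos hqnn hMpos hM2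
end

section
/- The polynomial 97x⁴ − 52x³ − 122x² + 12x + 1 has exactly one real root greater than 1 and exactly one real root in the open interval (0, 1). -/
private lemma poly_mono_gt1 (x y : ℝ) (hx : 1 ≤ x) (hxy : x < y) :
    97 * x ^ 4 - 52 * x ^ 3 - 122 * x ^ 2 + 12 * x + 1 <
    97 * y ^ 4 - 52 * y ^ 3 - 122 * y ^ 2 + 12 * y + 1 := by
  nlinarith [mul_pos (sub_pos.2 hxy) (sub_pos.2 hxy), sq_nonneg (x-1), sq_nonneg (y-1),
    sq_nonneg (x+y), mul_pos (sub_pos.2 hxy) (mul_pos (sub_pos.2 hxy) (sub_pos.2 hxy)),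
    sq_nonneg (y-x), mul_nonneg (sub_nonneg.2 hx) (le_of_lt (sub_pos.2 hxy))]

private lemma poly_pos_small (x : ℝ) (hx : 0 < x) (hx2 : x ≤ 1/10) :
    0 < 97 * x ^ 4 - 52 * x ^ 3 - 122 * x ^ 2 + 12 * x + 1 := by
  nlinarith [sq_nonneg x, pow_pos hx 4, mul_pos hx hx]

private lemma poly_anti (x y : ℝ) (hx : 1/10 ≤ x) (hxy : x < y) (hy : y < 1) :
    97 * y ^ 4 - 52 * y ^ 3 - 122 * y ^ 2 + 12 * y + 1 <
    97 * x ^ 4 - 52 * x ^ 3 - 122 * x ^ 2 + 12 * x + 1 := by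
  nlinarith [mul_pos (sub_pos.2 hxy) (sub_pos.2 hy),
    mul_pos (sub_pos.2 hxy) (sub_pos.2 (lt_of_le_of_lt hx (hxy.trans hy) : (1/10:ℝ) < 1)),
    sq_nonneg (x+y), sq_nonneg (x-y), mul_nonneg (sub_nonneg.2 hx) (sub_pos.2 hxy).le,
    mul_pos (sub_pos.2 hy) (sub_pos.2 hy),
    mul_pos (mul_pos (sub_pos.2 hxy) (sub_pos.2 hy)) (sub_pos.2 hy)]

private lemma poly_cont : Continuous (fun x : ℝ =>
    97 * x ^ 4 - 52 * x ^ 3 - 122 * x ^ 2 + 12 * x + 1) := by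
  continuity

/-- The polynomial `97x⁴ − 52x³ − 122x² + 12x + 1` has exactly one real root
greater than `1` and exactly one real root in the open interval `(0, 1)`. -/
theorem stmt_13 :
    (∃! x : ℝ, 1 < x ∧ 97 * x ^ 4 - 52 * x ^ 3 - 122 * x ^ 2 + 12 * x + 1 = 0) ∧
    (∃! x : ℝ, x ∈ Set.Ioo (0 : ℝ) 1 ∧
      97 * x ^ 4 - 52 * x ^ 3 - 122 * x ^ 2 + 12 * x + 1 = 0) := by
  constructor
  · -- root in (1, ∞)
    have hsub := intermediate_value_Icc (by norm_num : (1:ℝ) ≤ 2) poly_cont.continuousOn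
    have hmem : (0:ℝ) ∈ (fun x : ℝ => 97 * x ^ 4 - 52 * x ^ 3 - 122 * x ^ 2 + 12 * x + 1)
        '' Set.Icc 1 2 := hsub (by norm_num)
    obtain ⟨x, hx, hx0⟩ := hmem
    simp only at hx0
    have hx1 : (1:ℝ) < x := by
      rcases lt_or_eq_of_le hx.1 with h | h
      · exact h
      · exfalso; rw [← h] at hx0; norm_num at hx0
    refine ⟨x, ⟨hx1, hx0⟩, ?_⟩
    rintro y ⟨hy1, hy0⟩
    rcases lt_trichotomy y x with h | h | h
    · have := poly_mono_gt1 y x (le_of_lt hy1) h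
      rw [hy0, hx0] at this; exact absurd this (lt_irrefl 0)
    · exact h
    · have := poly_mono_gt1 x y (le_of_lt hx1) h
      rw [hy0, hx0] at this; exact absurd this (lt_irrefl 0)
  · -- root in (0, 1)
    have hsub := intermediate_value_Icc' (by norm_num : (1:ℝ)/10 ≤ 1/2) poly_cont.continuousOn
    have hmem : (0:ℝ) ∈ (fun x : ℝ => 97 * x ^ 4 - 52 * x ^ 3 - 122 * x ^ 2 + 12 * x + 1)
        '' Set.Icc (1/10) (1/2) := hsub (by norm_num)
    obtain ⟨x, hx, hx0⟩ := hmem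
    simp only at hx0
    have hxmem : x ∈ Set.Ioo (0:ℝ) 1 := ⟨by linarith [hx.1], by linarith [hx.2]⟩
    refine ⟨x, ⟨hxmem, hx0⟩, ?_⟩
    rintro y ⟨hy, hy0⟩
    have hx10 : 1/10 ≤ x := hx.1
    have hy10 : 1/10 < y := by
      by_contra h
      push_neg at h
      have := poly_pos_small y hy.1 h
      rw [hy0] at this; exact absurd this (lt_irrefl 0)
    rcases lt_trichotomy y x with h | h | h
    · have := poly_anti y x (le_of_lt hy10) h (by linarith [hx.2])
      rw [hy0, hx0] at this; exact absurd this (lt_irrefl 0)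
    · exact h
    · have := poly_anti x y hx10 h hy.2
      rw [hy0, hx0] at this; exact absurd this (lt_irrefl 0)
end

section
/- Let s₁, s₂, s₃ be pairwise distinct real numbers with s₂ + s₃ − 2s₁ ≠ 0, s₁ + s₃ − 2s₂ ≠ 0, and s₁ + s₂ − 2s₃ ≠ 0. Then the determinant of the 3×3 matrix with rows (1, 1, 1), (1/(s₂−s₃), 1/(s₃−s₁), 1/(s₁−s₂)), and (1/(s₂+s₃−2s₁), 1/(s₁+s₃−2s₂), 1/(s₁+s₂−2s₃)) equals 0. -/
/-!
With `a = s₂ - s₃`, `b = s₃ - s₁`, `c = s₁ - s₂` we have `a + b + c = 0`, and the third row is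
`(1/(b - c), 1/(c - a), 1/(a - b))`. On `a + b + c = 0` the identity `(a - b)(c - a) = 2e₂ - 3bc`
(`e₂ = ab + bc + ca`) gives `Δ / (b - c) = 2e₂ - 3e₃ / a` with `e₃ = abc`,
`Δ = (a - b)(b - c)(c - a)`, and cyclically; so `Δ • row₃ = 2e₂ • row₁ - 3e₃ • row₂`.
-/

namespace Matrix

theorem det_eq_zero_of_row_eq_sum {n R : Type*} [Fintype n] [DecidableEq n] [CommRing R]
    {A : Matrix n n R} (j : n) (c : n → R) (hc : c j = 0) (h : A j = ∑ k, c k • A k) :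
    A.det = 0 := by
  calc A.det = (A.updateRow j (∑ k, c k • A k)).det := by rw [← h, updateRow_eq_self]
    _ = 0 := by rw [det_updateRow_sum, hc, zero_smul]

end Matrix

section ZeroSum

variable {K : Type*} [Field K] {a b c : K}

theorem inv_sub_eq_of_add_add_eq_zero (habc : a + b + c = 0) (ha : a ≠ 0)
    (hab : a - b ≠ 0) (hbc : b - c ≠ 0) (hca : c - a ≠ 0) :
    (b - c)⁻¹ = (2 * (a * b + b * c + c * a) - 3 * (a * b * c) * a⁻¹)
      / ((a - b) * (b - c) * (c - a)) := by
  field_simp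
  linear_combination -a * habc

theorem det_one_inv_inv_sub_eq_zero (habc : a + b + c = 0) (ha : a ≠ 0) (hb : b ≠ 0) (hc : c ≠ 0)
    (hab : a - b ≠ 0) (hbc : b - c ≠ 0) (hca : c - a ≠ 0) :
    !![(1 : K), 1, 1;
       1 / a, 1 / b, 1 / c;
       1 / (b - c), 1 / (c - a), 1 / (a - b)].det = 0 := by
  refine Matrix.det_eq_zero_of_row_eq_sum 2
    ![2 * (a * b + b * c + c * a) / ((a - b) * (b - c) * (c - a)),
      -3 * (a * b * c) / ((a - b) * (b - c) * (c - a)), 0] rfl ?_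
  ext j
  fin_cases j <;>
    simp only [Fin.sum_univ_three, Finset.sum_apply, Pi.smul_apply, smul_eq_mul, Matrix.of_apply,
      Matrix.cons_val, Matrix.cons_val_zero, Matrix.cons_val_one,
      Fin.isValue, Fin.zero_eta, Fin.mk_one, Fin.reduceFinMk, one_div, mul_one, zero_mul, add_zero]
  · rw [inv_sub_eq_of_add_add_eq_zero habc ha hab hbc hca]; ring
  · rw [inv_sub_eq_of_add_add_eq_zero (by linear_combination habc) hb hbc hca hab]; ring
  · rw [inv_sub_eq_of_add_add_eq_zero (by linear_combination habc) hc hca hab hbc]; ring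

end ZeroSum

/-- The trilinears of `X₁`, `X₁₀₀`, `X₈₈` form a singular 3×3 matrix:
the three centers are collinear. -/
theorem stmt_14 (s₁ s₂ s₃ : ℝ)
    (h12 : s₁ ≠ s₂) (h23 : s₂ ≠ s₃) (h13 : s₁ ≠ s₃)
    (k1 : s₂ + s₃ - 2 * s₁ ≠ 0) (k2 : s₁ + s₃ - 2 * s₂ ≠ 0)
    (k3 : s₁ + s₂ - 2 * s₃ ≠ 0) :
    Matrix.det
      !![(1 : ℝ), 1, 1;
         1 / (s₂ - s₃), 1 / (s₃ - s₁), 1 / (s₁ - s₂);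
         1 / (s₂ + s₃ - 2 * s₁), 1 / (s₁ + s₃ - 2 * s₂), 1 / (s₁ + s₂ - 2 * s₃)]
      = 0 := by
  have e1 : s₂ + s₃ - 2 * s₁ = (s₃ - s₁) - (s₁ - s₂) := by ring
  have e2 : s₁ + s₃ - 2 * s₂ = (s₁ - s₂) - (s₂ - s₃) := by ring
  have e3 : s₁ + s₂ - 2 * s₃ = (s₂ - s₃) - (s₃ - s₁) := by ring
  have key := det_one_inv_inv_sub_eq_zero (by ring) (sub_ne_zero.2 h23) (sub_ne_zero.2 h13.symm)
    (sub_ne_zero.2 h12) (e3 ▸ k3) (e1 ▸ k1) (e2 ▸ k2)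
  rwa [← e1, ← e2, ← e3] at key
end

section
/- Let u be a real number with u² < 4, set v := √(12 − 3u²)/2, and let P₁ = (−1, 0), P₂ = (u, v), P₃ = (1, 0). Then: (i) the side lengths satisfy |P₂ − P₃| + |P₁ − P₂| = 2·|P₁ − P₃|; (ii) the incenter of triangle P₁P₂P₃ is I = (u/2, √(12 − 3u²)/6); (iii) the point D = (0, −√(12 − 3u²)/6) satisfies v(x² + y²) + (1 − u² − v²)y − v = 0, the equation of the circle through P₁, P₂, P₃; (iv) I is the midpoint of the segment from P₂ to D; and (v) |P₁ − D| = |P₃ − D| = |I − D| = √(48 − 3u²)/6. -/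
noncomputable section

/-- For the triangle `P₁ = (−1,0)`, `P₂ = (u,v)`, `P₃ = (1,0)` with
`v = √(12 − 3u²)/2`: (i) the middle side length is the average of the other
two; (ii) the incenter is `I = (u/2, √(12−3u²)/6)`; (iii) the point
`D = (0, −√(12−3u²)/6)` lies on the circle `v(x²+y²) + (1−u²−v²)y − v = 0`
through `P₁, P₂, P₃`; (iv) `I` is the midpoint of `P₂` and `D`; and
(v) `|P₁−D| = |P₃−D| = |I−D| = √(48−3u²)/6`. -/
theorem stmt_15 (u : ℝ) (hu : u ^ 2 < 4)
    (v : ℝ) (hv : v = Real.sqrt (12 - 3 * u ^ 2) / 2)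
    (P₁ P₂ P₃ I D : ℝ × ℝ)
    (hP₁ : P₁ = (-1, 0)) (hP₂ : P₂ = (u, v)) (hP₃ : P₃ = (1, 0))
    (hI : I = incenter P₁ P₂ P₃)
    (hD : D = (0, -(Real.sqrt (12 - 3 * u ^ 2) / 6))) :
    elen (P₂ - P₃) + elen (P₁ - P₂) = 2 * elen (P₁ - P₃) ∧
    I = (u / 2, Real.sqrt (12 - 3 * u ^ 2) / 6) ∧
    (∀ P ∈ ({P₁, P₂, P₃, D} : Set (ℝ × ℝ)),
      v * (P.1 ^ 2 + P.2 ^ 2) + (1 - u ^ 2 - v ^ 2) * P.2 - v = 0) ∧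
    I = midpoint ℝ P₂ D ∧
    (elen (P₁ - D) = Real.sqrt (48 - 3 * u ^ 2) / 6 ∧
     elen (P₃ - D) = Real.sqrt (48 - 3 * u ^ 2) / 6 ∧
     elen (I - D) = Real.sqrt (48 - 3 * u ^ 2) / 6) := by
  subst hv hP₁ hP₂ hP₃ hI hD
  set s := Real.sqrt (12 - 3 * u ^ 2) with hs
  have h12 : (0:ℝ) ≤ 12 - 3 * u ^ 2 := by nlinarith
  have hs2 : s ^ 2 = 12 - 3 * u ^ 2 := Real.sq_sqrt h12
  have hsnn : 0 ≤ s := Real.sqrt_nonneg _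
  have hult : u < 2 := by nlinarith
  have hugt : -2 < u := by nlinarith
  have e1 : elen ((u, s / 2) - (1, 0)) = 2 - u / 2 := by
    have hd : dot ((u, s / 2) - (1, 0)) ((u, s / 2) - (1, 0)) = (2 - u / 2) ^ 2 := by
      simp only [dot, Prod.mk_sub_mk]
      nlinarith [hs2]
    rw [elen, hd, Real.sqrt_sq (by nlinarith)]
  have e2 : elen (((-1 : ℝ), (0:ℝ)) - (1, 0)) = 2 := by
    have hd : dot (((-1 : ℝ), (0:ℝ)) - (1, 0)) (((-1:ℝ), (0:ℝ)) - (1, 0)) = (2:ℝ) ^ 2 := by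
      simp only [dot, Prod.mk_sub_mk]; norm_num
    rw [elen, hd, Real.sqrt_sq (by norm_num)]
  have e3 : elen (((-1:ℝ), (0:ℝ)) - (u, s / 2)) = 2 + u / 2 := by
    have hd : dot (((-1:ℝ), (0:ℝ)) - (u, s / 2)) (((-1:ℝ), (0:ℝ)) - (u, s / 2)) = (2 + u / 2) ^ 2 := by
      simp only [dot, Prod.mk_sub_mk]
      nlinarith [hs2]
    rw [elen, hd, Real.sqrt_sq (by nlinarith)]
  have hInc : incenter (-1, 0) (u, s / 2) (1, 0) = (u / 2, s / 6) := by
    rw [incenter, e1, e2, e3]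
    have h6 : (2 - u / 2) + 2 + (2 + u / 2) = (6:ℝ) := by ring
    rw [h6]
    simp only [Prod.smul_mk, smul_eq_mul, Prod.mk_add_mk, Prod.mk.injEq]
    constructor <;> ring
  have h48 : (0:ℝ) ≤ 48 - 3 * u ^ 2 := by nlinarith
  have h36 : Real.sqrt ((48 - 3 * u ^ 2) / 36) = Real.sqrt (48 - 3 * u ^ 2) / 6 := by
    rw [Real.sqrt_div h48, show Real.sqrt 36 = 6 by
      rw [show (36:ℝ) = 6 ^ 2 by norm_num, Real.sqrt_sq (by norm_num)]]
  refine ⟨by rw [e1, e3, e2]; ring, hInc, ?_, ?_, ?_, ?_, ?_⟩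
  · intro P hP
    rcases hP with rfl | rfl | rfl | rfl
    · simp only []; ring
    · simp only []; ring
    · simp only []; ring
    · simp only []
      linear_combination (s / 18) * hs2
  · rw [hInc, midpoint_eq_smul_add, Prod.mk_add_mk, Prod.smul_mk, Prod.mk.injEq,
      smul_eq_mul, smul_eq_mul]
    constructor <;> (rw [invOf_eq_inv]; ring)
  · have hd : dot (((-1:ℝ), (0:ℝ)) - (0, -(s / 6))) (((-1:ℝ), (0:ℝ)) - (0, -(s / 6)))
        = (48 - 3 * u ^ 2) / 36 := by
      simp only [dot, Prod.mk_sub_mk]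
      linear_combination hs2 / 36
    rw [elen, hd, h36]
  · have hd : dot (((1:ℝ), (0:ℝ)) - (0, -(s / 6))) (((1:ℝ), (0:ℝ)) - (0, -(s / 6)))
        = (48 - 3 * u ^ 2) / 36 := by
      simp only [dot, Prod.mk_sub_mk]
      linear_combination hs2 / 36
    rw [elen, hd, h36]
  · rw [hInc]
    have hd : dot ((u / 2, s / 6) - (0, -(s / 6))) ((u / 2, s / 6) - (0, -(s / 6)))
        = (48 - 3 * u ^ 2) / 36 := by
      simp only [dot, Prod.mk_sub_mk]
      linear_combination hs2 / 9
    rw [elen, hd, h36]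
end
end

section
/- Let s₁, s₂ > 0 be real numbers and s₃ := √(s₁² + s₂²). Then s₃(3s₃ − 2s₁ − 2s₂) > 0, the symmetric matrix M = [[2s₂, s₃ − s₁ − s₂], [s₃ − s₁ − s₂, 2s₁]] has eigenvalues λ± = (s₁ + s₂) ± √(s₃(3s₃ − 2s₁ − 2s₂)) with 0 < λ₋ < λ₊, and λ₊/λ₋ = (s₁ + s₂ + √(s₃(3s₃ − 2s₁ − 2s₂)))² / ((s₁ + s₂ + 3s₃)(s₁ + s₂ − s₃)). -/
/-- For `s₁, s₂ > 0` and `s₃ = √(s₁² + s₂²)` (a right triangle), one has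
`s₃(3s₃ − 2s₁ − 2s₂) > 0`; the Hessian matrix
`M = [[2s₂, s₃−s₁−s₂], [s₃−s₁−s₂, 2s₁]]` of the circumbilliard has spectrum
`{λ₋, λ₊}` where `λ± = (s₁+s₂) ± √(s₃(3s₃−2s₁−2s₂))`, with `0 < λ₋ < λ₊` and
`λ₊/λ₋ = (s₁+s₂+√(s₃(3s₃−2s₁−2s₂)))² / ((s₁+s₂+3s₃)(s₁+s₂−s₃))`. -/
theorem stmt_16 (s₁ s₂ : ℝ) (h₁ : 0 < s₁) (h₂ : 0 < s₂)
    (s₃ : ℝ) (hs₃ : s₃ = Real.sqrt (s₁ ^ 2 + s₂ ^ 2))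
    (M : Matrix (Fin 2) (Fin 2) ℝ)
    (hM : M = !![2 * s₂, s₃ - s₁ - s₂; s₃ - s₁ - s₂, 2 * s₁])
    (lm lp : ℝ)
    (hlm : lm = (s₁ + s₂) - Real.sqrt (s₃ * (3 * s₃ - 2 * s₁ - 2 * s₂)))
    (hlp : lp = (s₁ + s₂) + Real.sqrt (s₃ * (3 * s₃ - 2 * s₁ - 2 * s₂))) :
    0 < s₃ * (3 * s₃ - 2 * s₁ - 2 * s₂) ∧
    spectrum ℝ M = {lm, lp} ∧
    0 < lm ∧ lm < lp ∧
    lp / lm =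
      (s₁ + s₂ + Real.sqrt (s₃ * (3 * s₃ - 2 * s₁ - 2 * s₂))) ^ 2 /
        ((s₁ + s₂ + 3 * s₃) * (s₁ + s₂ - s₃)) := by
  have hq : 0 < s₁ ^ 2 + s₂ ^ 2 := by positivity
  have hs3pos : 0 < s₃ := hs₃ ▸ Real.sqrt_pos.mpr hq
  have hs3sq : s₃ ^ 2 = s₁ ^ 2 + s₂ ^ 2 := by rw [hs₃, Real.sq_sqrt hq.le]
  have hpos : 0 < 3 * s₃ + 2 * s₁ + 2 * s₂ := by linarith
  have h3 : 0 < 3 * s₃ - 2 * s₁ - 2 * s₂ := by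
    nlinarith [sq_nonneg (s₁ - s₂), mul_pos h₁ h₂]
  have hD : 0 < s₃ * (3 * s₃ - 2 * s₁ - 2 * s₂) := mul_pos hs3pos h3
  set r := Real.sqrt (s₃ * (3 * s₃ - 2 * s₁ - 2 * s₂)) with hrdef
  have hr : r ^ 2 = s₃ * (3 * s₃ - 2 * s₁ - 2 * s₂) := Real.sq_sqrt hD.le
  have hrpos : 0 < r := Real.sqrt_pos.mpr hD
  have hDlt : s₃ * (3 * s₃ - 2 * s₁ - 2 * s₂) < (s₁ + s₂) ^ 2 := by
    nlinarith [mul_pos h₁ h₂, mul_pos hs3pos (show (0:ℝ) < s₁ + s₂ by linarith),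
      sq_nonneg (s₁ * s₂), sq_nonneg ((s₁ + s₂) * s₃ - (s₁^2 + s₂^2 - s₁*s₂))]
  have hrlt : r < s₁ + s₂ := by nlinarith
  have hlm_pos : 0 < lm := by rw [hlm]; linarith
  have hlp_pos : 0 < lp := by rw [hlp]; linarith
  have hlmlp : lm < lp := by rw [hlm, hlp]; linarith
  refine ⟨hD, ?_, hlm_pos, hlmlp, ?_⟩
  · ext μ
    rw [spectrum.mem_iff, Matrix.isUnit_iff_isUnit_det, isUnit_iff_ne_zero, not_not]
    have he : (algebraMap ℝ (Matrix (Fin 2) (Fin 2) ℝ) μ - M) =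
        !![μ - 2 * s₂, -(s₃ - s₁ - s₂); -(s₃ - s₁ - s₂), μ - 2 * s₁] := by
      rw [hM]
      ext i j
      fin_cases i <;> fin_cases j <;>
        simp [Matrix.algebraMap_matrix_apply]
    rw [he, Matrix.det_fin_two_of]
    have key : (μ - 2 * s₂) * (μ - 2 * s₁) - -(s₃ - s₁ - s₂) * -(s₃ - s₁ - s₂) =
        (μ - lm) * (μ - lp) := by
      rw [hlm, hlp]
      linear_combination hr + 2*hs3sq
    rw [key, mul_eq_zero, sub_eq_zero, sub_eq_zero]
    simp [Set.mem_insert_iff]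
  · have hden : (s₁ + s₂ + 3 * s₃) * (s₁ + s₂ - s₃) = lm * lp := by
      rw [hlm, hlp]; linear_combination hr
    have hnum : (s₁ + s₂ + r) ^ 2 = lp * lp := by rw [hlp]; ring
    rw [hden, hnum, mul_div_mul_right _ _ hlp_pos.ne']
end

section
/- The polynomial 5x⁸ + 3x⁶ − 32x⁴ + 52x² − 36 has exactly one positive real root. -/
/-!
Substituting `t = x²` turns the octic into the quartic `5t⁴ + 3t³ − 32t² + 52t − 36`, whose
derivative `20t³ + 9t² − 64t + 52 = 20t(t − 1)² + (7t − 6)² + 16` is positive for `t ≥ 0`.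
Hence the octic is strictly increasing on `[0, ∞)`; it is negative at `1` and positive at `2`,
so it has exactly one positive zero.
-/

open Set

theorem existsUnique_pos_zero_of_strictMonoOn {f : ℝ → ℝ} (hcont : ContinuousOn f (Ici 0))
    (hmono : StrictMonoOn f (Ici 0)) {a b : ℝ} (ha : 0 < a) (hab : a ≤ b) (hfa : f a ≤ 0)
    (hfb : 0 ≤ f b) : ∃! x, 0 < x ∧ f x = 0 := by
  have hIcc : Icc a b ⊆ Ici 0 := fun x hx => le_trans ha.le hx.1
  obtain ⟨c, hc, hfc⟩ := intermediate_value_Icc hab (hcont.mono hIcc) ⟨hfa, hfb⟩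
  refine ⟨c, ⟨ha.trans_le hc.1, hfc⟩, fun y ⟨hy, hfy⟩ => ?_⟩
  exact hmono.injOn (mem_Ici.mpr hy.le) (hIcc hc) (hfy.trans hfc.symm)

namespace X162

def quartic (t : ℝ) : ℝ := 5 * t ^ 4 + 3 * t ^ 3 - 32 * t ^ 2 + 52 * t - 36

theorem hasDerivAt_quartic (t : ℝ) :
    HasDerivAt quartic (20 * t ^ 3 + 9 * t ^ 2 - 64 * t + 52) t := by
  have h := (((((hasDerivAt_pow 4 t).const_mul 5).add ((hasDerivAt_pow 3 t).const_mul 3)).sub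
    ((hasDerivAt_pow 2 t).const_mul 32)).add ((hasDerivAt_id t).const_mul 52)).sub_const 36
  exact h.congr_deriv (by norm_num; ring)

theorem continuous_quartic : Continuous quartic :=
  continuous_iff_continuousAt.2 fun t => (hasDerivAt_quartic t).continuousAt

theorem quartic_deriv_pos {t : ℝ} (ht : 0 ≤ t) : 0 < 20 * t ^ 3 + 9 * t ^ 2 - 64 * t + 52 := by
  have hsos : 20 * t ^ 3 + 9 * t ^ 2 - 64 * t + 52 =
      20 * t * (t - 1) ^ 2 + (7 * t - 6) ^ 2 + 16 := by ring
  rw [hsos]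
  positivity

theorem strictMonoOn_quartic : StrictMonoOn quartic (Ici 0) := by
  refine strictMonoOn_of_deriv_pos (convex_Ici 0) continuous_quartic.continuousOn fun t ht => ?_
  rw [interior_Ici] at ht
  rw [(hasDerivAt_quartic t).deriv]
  exact quartic_deriv_pos (le_of_lt ht)

end X162

open X162 in
/-- The polynomial `5x⁸ + 3x⁶ − 32x⁴ + 52x² − 36` has exactly one positive
real root. -/
theorem stmt_18 :
    ∃! x : ℝ, 0 < x ∧
      5 * x ^ 8 + 3 * x ^ 6 - 32 * x ^ 4 + 52 * x ^ 2 - 36 = 0 := by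
  have hsubst (x : ℝ) :
      5 * x ^ 8 + 3 * x ^ 6 - 32 * x ^ 4 + 52 * x ^ 2 - 36 = quartic (x ^ 2) := by
    unfold quartic; ring
  simp only [hsubst]
  have hmono : StrictMonoOn (fun x : ℝ => quartic (x ^ 2)) (Ici 0) :=
    strictMonoOn_quartic.comp (pow_left_strictMonoOn₀ two_ne_zero)
      fun x _ => mem_Ici.mpr (sq_nonneg x)
  exact existsUnique_pos_zero_of_strictMonoOn
    (continuous_quartic.comp (continuous_pow 2)).continuousOn hmono one_pos one_le_two
    (by norm_num [quartic]) (by norm_num [quartic])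
end
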